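/- arXiv:2312.04074 — 6 statements merged into one kernel-verified Lean document; each statement's English description precedes it below -/
import Mathlib

section
/- Subadditivity of von Neumann entropy: for any bipartite density matrix ρ_AB on a finite-dimensional Hilbert space, S(AB) ≤ S(A) + S(B). -/
open scoped BigOperators ComplexOrder

noncomputable section

namespace QIT

/-- von Neumann entropy `S(ρ) = -Tr(ρ log ρ)`, computed via eigenvalues
(set to `0` on non-Hermitian input). -/
noncomputable def vnEntropy {n : Type*} [Fintype n] [DecidableEq n]
    (ρ : Matrix n n ℂ) : ℝ :=
  if h : ρ.IsHermitian then -∑ i, h.eigenvalues i * Real.log (h.eigenvalues i) else 0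

/-- A density matrix: positive semidefinite with unit trace. -/
def IsDensity {n : Type*} [Fintype n] [DecidableEq n] (ρ : Matrix n n ℂ) : Prop :=
  ρ.PosSemidef ∧ ρ.trace = 1

/-- A pure density matrix (rank-one projector `|ψ⟩⟨ψ|`). -/
def IsPureDensity {n : Type*} [Fintype n] [DecidableEq n] (ρ : Matrix n n ℂ) : Prop :=
  IsDensity ρ ∧ ∃ ψ : n → ℂ, ρ = Matrix.vecMulVec ψ (star ψ)

/-- Glue an assignment on `I` with one on `Iᶜ` into a full assignment. -/
def glue {ι : Type*} [Fintype ι] [DecidableEq ι] {n : ι → Type*} (I : Finset ι)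
    (x : ∀ i : I, n i.1) (z : ∀ i : (Iᶜ : Finset ι), n i.1) : ∀ i, n i :=
  fun i => if h : i ∈ I then x ⟨i, h⟩ else z ⟨i, Finset.mem_compl.mpr h⟩

/-- The reduced density matrix on the parties in `I` (partial trace over `Iᶜ`). -/
noncomputable def reduce {ι : Type*} [Fintype ι] [DecidableEq ι] {n : ι → Type*}
    [∀ i, Fintype (n i)] [∀ i, DecidableEq (n i)]
    (ρ : Matrix (∀ i, n i) (∀ i, n i) ℂ) (I : Finset ι) :
    Matrix (∀ i : I, n i.1) (∀ i : I, n i.1) ℂ :=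
  fun x y => ∑ z : ∀ i : (Iᶜ : Finset ι), n i.1, ρ (glue I x z) (glue I y z)

/-- The entropy vector of a multipartite state: the entropies of all reduced
density matrices, indexed by nonempty subsets of the parties. -/
noncomputable def entropyVec {ι : Type*} [Fintype ι] [DecidableEq ι] {n : ι → Type*}
    [∀ i, Fintype (n i)] [∀ i, DecidableEq (n i)]
    (ρ : Matrix (∀ i, n i) (∀ i, n i) ℂ) :
    {I : Finset ι // I.Nonempty} → ℝ :=
  fun I => vnEntropy (reduce ρ I.1)

/-- A vector in `ℝ^(2^N - 1)` is realizable if it is the entropy vector of some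
`N`-party density matrix (on finite-dimensional factors). -/
def Realizable (N : ℕ) (v : {I : Finset (Fin N) // I.Nonempty} → ℝ) : Prop :=
  ∃ (d : Fin N → ℕ) (ρ : Matrix (∀ i, Fin (d i)) (∀ i, Fin (d i)) ℂ),
    IsDensity ρ ∧ entropyVec ρ = v

variable {A B : Type*} [Fintype A] [DecidableEq A] [Fintype B] [DecidableEq B]

/-- Reduced density matrix `ρ_A`: partial trace over `H_B`. -/
def reducedA (ρ : Matrix (A × B) (A × B) ℂ) : Matrix A A ℂ :=
  fun a a' => ∑ b, ρ (a, b) (a', b)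

/-- Reduced density matrix `ρ_B`: partial trace over `H_A`. -/
def reducedB (ρ : Matrix (A × B) (A × B) ℂ) : Matrix B B ℂ :=
  fun b b' => ∑ a, ρ (a, b) (a, b')

open Matrix
open scoped Kronecker
set_option linter.unusedSectionVars false
set_option maxHeartbeats 1000000

lemma term_ineq {p P q : ℝ} (hp : 0 ≤ p) (hP : 0 ≤ P) (hq : 0 ≤ q)
    (h0 : q = 0 → p * P = 0) :
    p * P * Real.log q ≤ p * P * Real.log p - p * P + P * q := by
  rcases eq_or_lt_of_le hP with hP0 | hP0
  · simp [← hP0]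
  rcases eq_or_lt_of_le hp with hp0 | hp0
  · simp only [← hp0, zero_mul]
    positivity
  rcases eq_or_lt_of_le hq with hq0 | hq0
  · exfalso
    have := h0 hq0.symm
    nlinarith
  · have hlog : Real.log (q / p) ≤ q / p - 1 := Real.log_le_sub_one_of_pos (by positivity)
    rw [Real.log_div (ne_of_gt hq0) (ne_of_gt hp0)] at hlog
    have h2 : p * (Real.log q - Real.log p) ≤ q - p := by
      have h3 := mul_le_mul_of_nonneg_left hlog hp
      have h4 : p * (q / p - 1) = q - p := by field_simp
      linarith
    nlinarith

lemma sum_eigenvalues_eq_trace {n : Type*} [Fintype n] [DecidableEq n]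
    {ρ : Matrix n n ℂ} (h : ρ.IsHermitian) :
    (∑ i, (h.eigenvalues i : ℂ)) = ρ.trace := by
  nth_rewrite 2 [h.spectral_theorem]
  rw [Unitary.conjStarAlgAut_apply, Matrix.trace_mul_cycle, Matrix.mem_unitaryGroup_iff'.mp (h.eigenvectorUnitary).2,
    one_mul, Matrix.trace_diagonal]
  rfl

lemma reducedA_posSemidef {ρ : Matrix (A × B) (A × B) ℂ} (h : ρ.PosSemidef) :
    (reducedA ρ).PosSemidef := by
  rw [Matrix.posSemidef_iff_dotProduct_mulVec]
  constructor
  · ext a a'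
    simp only [conjTranspose_apply, reducedA, star_sum]
    refine Finset.sum_congr rfl fun b _ => ?_
    exact congrFun (congrFun h.1 (a, b)) (a', b)
  · intro x
    have key : ∀ b : B, (0:ℂ) ≤ ∑ a, ∑ a', (starRingEnd ℂ) (x a) * (ρ (a, b) (a', b) * x a') := by
      intro b
      have := h.dotProduct_mulVec_nonneg (fun y : A × B => if y.2 = b then x y.1 else 0)
      simpa [dotProduct, Matrix.mulVec, Fintype.sum_prod_type, Finset.mul_sum,
        mul_assoc, apply_ite (starRingEnd ℂ), ite_mul, Finset.sum_ite_eq'] using this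
    calc (0:ℂ) ≤ ∑ b, ∑ a, ∑ a', (starRingEnd ℂ) (x a) * (ρ (a, b) (a', b) * x a') :=
          Finset.sum_nonneg fun b _ => key b
      _ = star x ⬝ᵥ reducedA ρ *ᵥ x := by
          simp only [dotProduct, Matrix.mulVec, reducedA, Pi.star_apply,
            Finset.mul_sum, Finset.sum_mul]
          rw [Finset.sum_comm]
          refine Finset.sum_congr rfl fun a _ => Finset.sum_comm.trans ?_
          refine Finset.sum_congr rfl fun a' _ => Finset.sum_congr rfl fun b _ => by
            rw [Complex.star_def]

lemma reducedB_posSemidef {ρ : Matrix (A × B) (A × B) ℂ} (h : ρ.PosSemidef) :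
    (reducedB ρ).PosSemidef := by
  rw [Matrix.posSemidef_iff_dotProduct_mulVec]
  constructor
  · ext b b'
    simp only [conjTranspose_apply, reducedB, star_sum]
    refine Finset.sum_congr rfl fun a _ => ?_
    exact congrFun (congrFun h.1 (a, b)) (a, b')
  · intro x
    have key : ∀ a : A, (0:ℂ) ≤ ∑ b, ∑ b', (starRingEnd ℂ) (x b) * (ρ (a, b) (a, b') * x b') := by
      intro a
      have := h.dotProduct_mulVec_nonneg (fun y : A × B => if y.1 = a then x y.2 else 0)
      simpa [dotProduct, Matrix.mulVec, Fintype.sum_prod_type, Finset.mul_sum,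
        mul_assoc, apply_ite (starRingEnd ℂ), ite_mul, Finset.sum_ite_eq'] using this
    calc (0:ℂ) ≤ ∑ a, ∑ b, ∑ b', (starRingEnd ℂ) (x b) * (ρ (a, b) (a, b') * x b') :=
          Finset.sum_nonneg fun a _ => key a
      _ = star x ⬝ᵥ reducedB ρ *ᵥ x := by
          simp only [dotProduct, Matrix.mulVec, reducedB, Pi.star_apply,
            Finset.mul_sum, Finset.sum_mul]
          rw [Finset.sum_comm]
          refine Finset.sum_congr rfl fun b _ => Finset.sum_comm.trans ?_
          refine Finset.sum_congr rfl fun b' _ => Finset.sum_congr rfl fun a _ => by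
            rw [Complex.star_def]

lemma trace_reducedA (ρ : Matrix (A × B) (A × B) ℂ) : (reducedA ρ).trace = ρ.trace := by
  simp [Matrix.trace, reducedA, Fintype.sum_prod_type, Matrix.diag]

lemma trace_reducedB (ρ : Matrix (A × B) (A × B) ℂ) : (reducedB ρ).trace = ρ.trace := by
  rw [Matrix.trace, Matrix.trace]
  simp only [reducedB, Matrix.diag, Fintype.sum_prod_type]
  exact Finset.sum_comm

lemma kron_conjTranspose (U : Matrix A A ℂ) (W : Matrix B B ℂ) :
    (U ⊗ₖ W)ᴴ = Uᴴ ⊗ₖ Wᴴ := by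
  ext x y
  simp [conjTranspose_apply, kroneckerMap_apply, mul_comm]

lemma ptraceA_conj (ρ : Matrix (A × B) (A × B) ℂ) (U : Matrix A A ℂ) (W : Matrix B B ℂ)
    (hW : W * Wᴴ = 1) (a : A) :
    ∑ b, ((U ⊗ₖ W)ᴴ * ρ * (U ⊗ₖ W)) (a,b) (a,b) = (Uᴴ * reducedA ρ * U) a a := by
  have key : ∀ x2 y2 : B, ∑ b, W y2 b * (starRingEnd ℂ) (W x2 b) = if y2 = x2 then 1 else 0 := by
    intro x2 y2
    have := congrFun (congrFun hW y2) x2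
    simpa [Matrix.mul_apply, Matrix.one_apply, conjTranspose_apply, Complex.star_def] using this
  calc ∑ b, ((U ⊗ₖ W)ᴴ * ρ * (U ⊗ₖ W)) (a,b) (a,b)
      = ∑ b, ∑ x : A×B, ∑ y : A×B, (starRingEnd ℂ) (U x.1 a) * ρ x y * U y.1 a
          * (W y.2 b * (starRingEnd ℂ) (W x.2 b)) := by
        refine Finset.sum_congr rfl fun b _ => ?_
        simp only [Matrix.mul_apply, conjTranspose_apply, kroneckerMap_apply, Finset.sum_mul,
          Complex.star_def, _root_.map_mul]
        rw [Finset.sum_comm]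
        exact Finset.sum_congr rfl fun x _ => Finset.sum_congr rfl fun y _ => by ring
    _ = ∑ x : A×B, ∑ y : A×B, (starRingEnd ℂ) (U x.1 a) * ρ x y * U y.1 a
          * (if y.2 = x.2 then 1 else 0) := by
        rw [Finset.sum_comm]
        refine Finset.sum_congr rfl fun x _ => ?_
        rw [Finset.sum_comm]
        exact Finset.sum_congr rfl fun y _ => by rw [← Finset.mul_sum, key]
    _ = (Uᴴ * reducedA ρ * U) a a := by
        simp only [mul_ite, mul_one, mul_zero, Fintype.sum_prod_type, Finset.sum_ite_eq',
          Finset.mem_univ, if_true]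
        simp only [Matrix.mul_apply, reducedA, conjTranspose_apply, Finset.sum_mul,
          Finset.mul_sum, Complex.star_def]
        refine (Finset.sum_congr rfl fun x1 _ => Finset.sum_comm).trans ?_
        refine Finset.sum_comm.trans ?_
        exact Finset.sum_congr rfl fun y1 _ =>
          Finset.sum_congr rfl fun x1 _ => Finset.sum_congr rfl fun x2 _ => by ring

lemma ptraceB_conj (ρ : Matrix (A × B) (A × B) ℂ) (U : Matrix A A ℂ) (W : Matrix B B ℂ)
    (hU : U * Uᴴ = 1) (b : B) :
    ∑ a, ((U ⊗ₖ W)ᴴ * ρ * (U ⊗ₖ W)) (a,b) (a,b) = (Wᴴ * reducedB ρ * W) b b := by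
  have key : ∀ x1 y1 : A, ∑ a, U y1 a * (starRingEnd ℂ) (U x1 a) = if y1 = x1 then 1 else 0 := by
    intro x1 y1
    have := congrFun (congrFun hU y1) x1
    simpa [Matrix.mul_apply, Matrix.one_apply, conjTranspose_apply, Complex.star_def] using this
  calc ∑ a, ((U ⊗ₖ W)ᴴ * ρ * (U ⊗ₖ W)) (a,b) (a,b)
      = ∑ a, ∑ x : A×B, ∑ y : A×B, (starRingEnd ℂ) (W x.2 b) * ρ x y * W y.2 b
          * (U y.1 a * (starRingEnd ℂ) (U x.1 a)) := by
        refine Finset.sum_congr rfl fun a _ => ?_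
        simp only [Matrix.mul_apply, conjTranspose_apply, kroneckerMap_apply, Finset.sum_mul,
          Complex.star_def, _root_.map_mul]
        rw [Finset.sum_comm]
        exact Finset.sum_congr rfl fun x _ => Finset.sum_congr rfl fun y _ => by ring
    _ = ∑ x : A×B, ∑ y : A×B, (starRingEnd ℂ) (W x.2 b) * ρ x y * W y.2 b
          * (if y.1 = x.1 then 1 else 0) := by
        rw [Finset.sum_comm]
        refine Finset.sum_congr rfl fun x _ => ?_
        rw [Finset.sum_comm]
        exact Finset.sum_congr rfl fun y _ => by rw [← Finset.mul_sum, key]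
    _ = (Wᴴ * reducedB ρ * W) b b := by
        simp only [mul_ite, mul_one, mul_zero, Fintype.sum_prod_type]
        simp only [Matrix.mul_apply, reducedB, conjTranspose_apply, Finset.sum_mul,
          Finset.mul_sum, Complex.star_def]
        have collapse : ∀ (x1 : A) (x2 : B),
            (∑ y1 : A, ∑ y2 : B, if y1 = x1
                then (starRingEnd ℂ) (W x2 b) * ρ (x1,x2) (y1,y2) * W y2 b else 0)
            = ∑ y2 : B, (starRingEnd ℂ) (W x2 b) * ρ (x1,x2) (x1,y2) * W y2 b := by
          intro x1 x2
          rw [Finset.sum_comm]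
          refine Finset.sum_congr rfl fun y2 _ => ?_
          simp
        refine (Finset.sum_congr rfl fun x1 _ => Finset.sum_congr rfl
          fun x2 _ => collapse x1 x2).trans ?_
        refine Finset.sum_comm.trans ?_
        refine (Finset.sum_congr rfl fun x2 _ => Finset.sum_comm).trans ?_
        refine Finset.sum_comm.trans ?_
        exact Finset.sum_congr rfl fun y2 _ =>
          Finset.sum_congr rfl fun x2 _ => Finset.sum_congr rfl fun x1 _ => by ring

/-- Subadditivity of von Neumann entropy: `S(AB) ≤ S(A) + S(B)` for any bipartite
density matrix on a finite-dimensional Hilbert space. -/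
theorem subadditivity (ρ : Matrix (A × B) (A × B) ℂ) (hρ : IsDensity ρ) :
    vnEntropy ρ ≤ vnEntropy (reducedA ρ) + vnEntropy (reducedB ρ) := by
  obtain ⟨hpsd, htr⟩ := hρ
  have hH : ρ.IsHermitian := hpsd.1
  have hApsd := reducedA_posSemidef hpsd
  have hBpsd := reducedB_posSemidef hpsd
  have hA : (reducedA ρ).IsHermitian := hApsd.1
  have hB : (reducedB ρ).IsHermitian := hBpsd.1
  rw [vnEntropy, vnEntropy, vnEntropy, dif_pos hH, dif_pos hA, dif_pos hB]
  set p : A × B → ℝ := hH.eigenvalues with hp_def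
  set lam : A → ℝ := hA.eigenvalues with hlam_def
  set mu : B → ℝ := hB.eigenvalues with hmu_def
  set V : Matrix (A × B) (A × B) ℂ := ↑hH.eigenvectorUnitary with hV_def
  set U : Matrix A A ℂ := ↑hA.eigenvectorUnitary with hU_def
  set W : Matrix B B ℂ := ↑hB.eigenvectorUnitary with hW_def
  -- unitarity
  have hV1 : Vᴴ * V = 1 := Matrix.mem_unitaryGroup_iff'.mp hH.eigenvectorUnitary.2
  have hV2 : V * Vᴴ = 1 := Matrix.mem_unitaryGroup_iff.mp hH.eigenvectorUnitary.2
  have hU1 : Uᴴ * U = 1 := Matrix.mem_unitaryGroup_iff'.mp hA.eigenvectorUnitary.2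
  have hU2 : U * Uᴴ = 1 := Matrix.mem_unitaryGroup_iff.mp hA.eigenvectorUnitary.2
  have hW1 : Wᴴ * W = 1 := Matrix.mem_unitaryGroup_iff'.mp hB.eigenvectorUnitary.2
  have hW2 : W * Wᴴ = 1 := Matrix.mem_unitaryGroup_iff.mp hB.eigenvectorUnitary.2
  set K : Matrix (A × B) (A × B) ℂ := U ⊗ₖ W with hK_def
  have hK1 : Kᴴ * K = 1 := by
    rw [hK_def, kron_conjTranspose, ← Matrix.mul_kronecker_mul, hU1, hW1,
      Matrix.one_kronecker_one]
  have hK2 : K * Kᴴ = 1 := by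
    rw [hK_def, kron_conjTranspose, ← Matrix.mul_kronecker_mul, hU2, hW2,
      Matrix.one_kronecker_one]
  set M : Matrix (A × B) (A × B) ℂ := Vᴴ * K with hM_def
  have hM1 : Mᴴ * M = 1 := by
    rw [hM_def, Matrix.conjTranspose_mul, Matrix.conjTranspose_conjTranspose]
    calc Kᴴ * V * (Vᴴ * K) = Kᴴ * (V * Vᴴ) * K := by
          simp only [Matrix.mul_assoc]
      _ = 1 := by rw [hV2, Matrix.mul_one, hK1]
  have hM2 : M * Mᴴ = 1 := by
    rw [hM_def, Matrix.conjTranspose_mul, Matrix.conjTranspose_conjTranspose]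
    calc Vᴴ * K * (Kᴴ * V) = Vᴴ * (K * Kᴴ) * V := by
          simp only [Matrix.mul_assoc]
      _ = 1 := by rw [hK2, Matrix.mul_one, hV1]
  set P : (A × B) → (A × B) → ℝ := fun i j => Complex.normSq (M i j) with hP_def
  have hPnn : ∀ i j, 0 ≤ P i j := fun i j => Complex.normSq_nonneg _
  have hpnn : ∀ i, 0 ≤ p i := fun i => hpsd.eigenvalues_nonneg i
  have hlamnn : ∀ a, 0 ≤ lam a := fun a => hApsd.eigenvalues_nonneg a
  have hmunn : ∀ b, 0 ≤ mu b := fun b => hBpsd.eigenvalues_nonneg b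
  -- row and column sums of P
  have Prow : ∀ i, ∑ j, P i j = 1 := by
    intro i
    have := congrFun (congrFun hM2 i) i
    rw [Matrix.mul_apply, Matrix.one_apply_eq] at this
    have h2 : ∑ j, ((P i j : ℂ)) = 1 := by
      rw [← this]
      refine Finset.sum_congr rfl fun j _ => ?_
      simp only [Matrix.conjTranspose_apply, Complex.star_def]
      exact (Complex.mul_conj _).symm
    exact_mod_cast h2
  have Pcol : ∀ j, ∑ i, P i j = 1 := by
    intro j
    have := congrFun (congrFun hM1 j) j
    rw [Matrix.mul_apply, Matrix.one_apply_eq] at this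
    have h2 : ∑ i, ((P i j : ℂ)) = 1 := by
      rw [← this]
      refine Finset.sum_congr rfl fun i _ => ?_
      simp only [Matrix.conjTranspose_apply, Complex.star_def]
      exact Complex.normSq_eq_conj_mul_self
    exact_mod_cast h2
  -- sums of eigenvalues
  have hp_sum : ∑ i, p i = 1 := by
    have := sum_eigenvalues_eq_trace hH
    rw [htr] at this
    exact_mod_cast this
  have hlam_sum : ∑ a, lam a = 1 := by
    have := sum_eigenvalues_eq_trace hA
    rw [trace_reducedA, htr] at this
    exact_mod_cast this
  have hmu_sum : ∑ b, mu b = 1 := by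
    have := sum_eigenvalues_eq_trace hB
    rw [trace_reducedB, htr] at this
    exact_mod_cast this
  -- the conjugated state and its diagonal
  set r : (A × B) → ℝ := fun j => ∑ i, p i * P i j with hr_def
  have hrnn : ∀ j, 0 ≤ r j := fun j =>
    Finset.sum_nonneg fun i _ => mul_nonneg (hpnn i) (hPnn i j)
  have hrC : ∀ j, (Kᴴ * ρ * K) j j = ((r j : ℂ)) := by
    intro j
    have hspec : Kᴴ * ρ * K = Mᴴ * (Matrix.diagonal (RCLike.ofReal ∘ p) : Matrix (A × B) (A × B) ℂ) * M := by
      rw [hM_def, Matrix.conjTranspose_mul, Matrix.conjTranspose_conjTranspose]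
      nth_rewrite 1 [hH.spectral_theorem]
      rw [Unitary.conjStarAlgAut_apply, Matrix.star_eq_conjTranspose]
      simp only [Matrix.mul_assoc, hV_def, hp_def]
    rw [hspec, Matrix.mul_apply]
    have key : ∀ i, (Mᴴ * (Matrix.diagonal (RCLike.ofReal ∘ p) : Matrix (A × B) (A × B) ℂ)) j i * M i j
        = ((p i * P i j : ℝ) : ℂ) := by
      intro i
      rw [Matrix.mul_diagonal, Matrix.conjTranspose_apply, Complex.star_def]
      show (starRingEnd ℂ) (M i j) * ((p i : ℝ) : ℂ) * M i j = _
      push_cast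
      rw [mul_comm ((starRingEnd ℂ) (M i j)) _, mul_assoc, ← Complex.normSq_eq_conj_mul_self]
    rw [Finset.sum_congr rfl fun i _ => key i]
    rw [hr_def]
    push_cast
    rfl
  -- marginals of r
  have rsumA : ∀ a, ∑ b, r (a, b) = lam a := by
    intro a
    have h1 := ptraceA_conj ρ U W hW2 a
    have h2 : (Uᴴ * reducedA ρ * U) a a = ((lam a : ℂ)) := by
      have := hA.conjStarAlgAut_star_eigenvectorUnitary
      rw [Unitary.conjStarAlgAut_star_apply, Matrix.star_eq_conjTranspose] at this
      rw [hU_def, this]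
      simp [Matrix.diagonal_apply_eq, hlam_def]
    rw [← hK_def] at h1
    have h3 : ∑ b, ((r (a, b) : ℂ)) = ((lam a : ℂ)) := by
      rw [← h2, ← h1]
      exact Finset.sum_congr rfl fun b _ => (hrC (a, b)).symm
    exact_mod_cast h3
  have rsumB : ∀ b, ∑ a, r (a, b) = mu b := by
    intro b
    have h1 := ptraceB_conj ρ U W hU2 b
    have h2 : (Wᴴ * reducedB ρ * W) b b = ((mu b : ℂ)) := by
      have := hB.conjStarAlgAut_star_eigenvectorUnitary
      rw [Unitary.conjStarAlgAut_star_apply, Matrix.star_eq_conjTranspose] at this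
      rw [hW_def, this]
      simp [Matrix.diagonal_apply_eq, hmu_def]
    rw [← hK_def] at h1
    have h3 : ∑ a, ((r (a, b) : ℂ)) = ((mu b : ℂ)) := by
      rw [← h2, ← h1]
      exact Finset.sum_congr rfl fun a _ => (hrC (a, b)).symm
    exact_mod_cast h3
  -- the product eigenvalue vector
  set q : A × B → ℝ := fun j => lam j.1 * mu j.2 with hq_def
  have hqnn : ∀ j, 0 ≤ q j := fun j => mul_nonneg (hlamnn _) (hmunn _)
  have hrleLam : ∀ j, r j ≤ lam j.1 := by
    intro j
    rw [← rsumA j.1]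
    simpa using Finset.single_le_sum (f := fun b => r (j.1, b))
      (fun b _ => hrnn (j.1, b)) (Finset.mem_univ j.2)
  have hrleMu : ∀ j, r j ≤ mu j.2 := by
    intro j
    rw [← rsumB j.2]
    simpa using Finset.single_le_sum (f := fun a => r (a, j.2))
      (fun a _ => hrnn (a, j.2)) (Finset.mem_univ j.1)
  have hq0 : ∀ j, q j = 0 → ∀ i, p i * P i j = 0 := by
    intro j hq i
    have hr0 : r j = 0 := by
      rcases mul_eq_zero.mp hq with h | h
      · exact le_antisymm (h ▸ hrleLam j) (hrnn j)
      · exact le_antisymm (h ▸ hrleMu j) (hrnn j)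
    have hr0' : ∑ i, p i * P i j = 0 := hr0
    exact (Finset.sum_eq_zero_iff_of_nonneg
      (fun i _ => mul_nonneg (hpnn i) (hPnn i j))).mp hr0' i (Finset.mem_univ i)
  have e_lam : ∑ a, lam a * Real.log (lam a) = ∑ j : A × B, r j * Real.log (lam j.1) := by
    rw [Fintype.sum_prod_type]
    refine Finset.sum_congr rfl fun a _ => ?_
    have h1 : (∑ y : B, r (a, y)) * Real.log (lam a)
        = ∑ y : B, r (a, y) * Real.log (lam (a, y).1) := Finset.sum_mul _ _ _
    rw [← h1, rsumA a]
  have e_mu : ∑ b, mu b * Real.log (mu b) = ∑ j : A × B, r j * Real.log (mu j.2) := by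
    rw [Fintype.sum_prod_type, Finset.sum_comm]
    refine Finset.sum_congr rfl fun b _ => ?_
    have h1 : (∑ x : A, r (x, b)) * Real.log (mu b)
        = ∑ x : A, r (x, b) * Real.log (mu (x, b).2) := Finset.sum_mul _ _ _
    rw [← h1, rsumB b]
  have e_q : ∀ j : A × B, r j * Real.log (lam j.1) + r j * Real.log (mu j.2)
      = r j * Real.log (q j) := by
    intro j
    rcases eq_or_lt_of_le (hrnn j) with h0 | h0
    · rw [← h0]
      ring
    · have hlam : 0 < lam j.1 := lt_of_lt_of_le h0 (hrleLam j)
      have hmu : 0 < mu j.2 := lt_of_lt_of_le h0 (hrleMu j)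
      rw [show q j = lam j.1 * mu j.2 from rfl,
        Real.log_mul (ne_of_gt hlam) (ne_of_gt hmu)]
      ring
  have e_qsum : ∑ j : A × B, q j = 1 := by
    have h1 : ∑ j : A × B, q j = ∑ a, ∑ b, lam a * mu b := Fintype.sum_prod_type _
    rw [h1]
    calc ∑ a, ∑ b, lam a * mu b = ∑ a, lam a * ∑ b, mu b :=
          Finset.sum_congr rfl fun a _ => (Finset.mul_sum _ _ _).symm
      _ = 1 := by
          rw [hmu_sum]
          simpa using hlam_sum
  have main : ∑ j : A × B, r j * Real.log (q j) ≤ ∑ i, p i * Real.log (p i) := by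
    have lhs_eq : ∑ j : A × B, r j * Real.log (q j)
        = ∑ i, ∑ j : A × B, p i * P i j * Real.log (q j) := by
      rw [Finset.sum_comm]
      refine Finset.sum_congr rfl fun j _ => ?_
      rw [show r j = ∑ i, p i * P i j from rfl, Finset.sum_mul]
    have sum2 : ∑ i, ∑ j : A × B, p i * P i j = 1 := by
      refine Eq.trans (Finset.sum_congr rfl fun i _ => ?_) hp_sum
      rw [← Finset.mul_sum, Prow i, mul_one]
    have sum3 : ∑ i, ∑ j : A × B, P i j * q j = 1 := by
      rw [Finset.sum_comm]
      calc ∑ j : A × B, ∑ i, P i j * q j = ∑ j : A × B, q j := by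
            refine Finset.sum_congr rfl fun j _ => ?_
            rw [← Finset.sum_mul, Pcol j, one_mul]
        _ = 1 := e_qsum
    have sum1 : ∑ i, ∑ j : A × B, p i * P i j * Real.log (p i)
        = ∑ i, p i * Real.log (p i) := by
      refine Finset.sum_congr rfl fun i _ => ?_
      calc ∑ j : A × B, p i * P i j * Real.log (p i)
          = ∑ j : A × B, (p i * Real.log (p i)) * P i j :=
            Finset.sum_congr rfl fun j _ => by ring
        _ = (p i * Real.log (p i)) * ∑ j, P i j := (Finset.mul_sum _ _ _).symm
        _ = p i * Real.log (p i) := by rw [Prow i, mul_one]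
    have step : ∑ i, ∑ j : A × B, p i * P i j * Real.log (q j)
        ≤ ∑ i, ∑ j : A × B, (p i * P i j * Real.log (p i) - p i * P i j + P i j * q j) :=
      Finset.sum_le_sum fun i _ => Finset.sum_le_sum fun j _ =>
        term_ineq (hpnn i) (hPnn i j) (hqnn j) (fun h => hq0 j h i)
    have expand : ∑ i, ∑ j : A × B, (p i * P i j * Real.log (p i) - p i * P i j + P i j * q j)
        = ∑ i, ∑ j : A × B, p i * P i j * Real.log (p i)
          - ∑ i, ∑ j : A × B, p i * P i j + ∑ i, ∑ j : A × B, P i j * q j := by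
      rw [← Finset.sum_sub_distrib, ← Finset.sum_add_distrib]
      refine Finset.sum_congr rfl fun i _ => ?_
      rw [← Finset.sum_sub_distrib, ← Finset.sum_add_distrib]
    rw [lhs_eq]
    rw [expand, sum1, sum2, sum3] at step
    linarith
  have e_split : ∑ j : A × B, (r j * Real.log (lam j.1) + r j * Real.log (mu j.2))
      = ∑ j : A × B, r j * Real.log (lam j.1) + ∑ j : A × B, r j * Real.log (mu j.2) :=
    Finset.sum_add_distrib
  have e_qq : ∑ j : A × B, (r j * Real.log (lam j.1) + r j * Real.log (mu j.2))
      = ∑ j : A × B, r j * Real.log (q j) :=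
    Finset.sum_congr rfl fun j _ => e_q j
  linarith


end QIT
end
end

section
/- The conical hull of a set of N-party entropy vectors realizable by quantum states is contained in the closure of the set of all realizable N-party entropy vectors; i.e., the closure of the set Σ*_N of N-party entropy vectors is a convex cone. -/
open scoped BigOperators ComplexOrder

noncomputable section

namespace QIT

/-- The `N`-party entropy space `ℝ^(2^N - 1)`, coordinates indexed by nonempty
subsets of the parties. -/
abbrev ES (N : ℕ) := {I : Finset (Fin N) // I.Nonempty} → ℝ

/-- The component of an entropy vector at a (possibly empty) index set,
with the convention `S_∅ = 0`. -/
def comp {N : ℕ} (v : ES N) (J : Finset (Fin N)) : ℝ :=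
  if h : J.Nonempty then v ⟨J, h⟩ else 0

/-- The `N`-party subadditivity cone: all instances `S_I + S_J ≥ S_{I∪J}` for
disjoint nonempty `I, J`. -/
def SAC (N : ℕ) : Set (ES N) :=
  {v | ∀ I J : Finset (Fin N), I.Nonempty → J.Nonempty → Disjoint I J →
    comp v (I ∪ J) ≤ comp v I + comp v J}

/-- `v` generates an extreme ray of the cone `C`. -/
def IsExtremeRayOf {V : Type*} [AddCommMonoid V] [Module ℝ V] (C : Set V) (v : V) : Prop :=
  v ∈ C ∧ v ≠ 0 ∧ ∀ x ∈ C, ∀ y ∈ C, v = x + y → ∃ c : ℝ, 0 ≤ c ∧ x = c • v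

/-- `E*_N`: generators of extreme rays of the `N`-party subadditivity cone lying in
the closure of the quantum entropy cone (i.e. realizable, at least approximately,
by quantum states). -/
def Estar (N : ℕ) : Set (ES N) :=
  {v | IsExtremeRayOf (SAC N) v ∧ v ∈ closure {w | Realizable N w}}

/-- The linear coarse-graining map `Ψ_f` on entropy space induced by a
coarse graining `f : {0,…,N'} → {0,…,N}` (`none` plays the role of the purifier `0`):
`(Ψ_f v)_I = v_{f⁻¹(I)}`, interpreting index sets containing the purifier via their
complements. -/
def Psi {NP N : ℕ} (f : Option (Fin NP) → Option (Fin N)) (v : ES NP) : ES N :=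
  fun I =>
    let P : Finset (Fin NP) := Finset.univ.filter (fun i => f (some i) ∈ I.1.image some)
    if f none ∈ I.1.image some then comp v Pᶜ else comp v P

/-- The conical hull of a set: all finite nonnegative combinations. -/
def coneHull {V : Type*} [AddCommMonoid V] [Module ℝ V] (S : Set V) : Set V :=
  {x | ∃ (k : ℕ) (c : Fin k → ℝ) (p : Fin k → V),
    (∀ i, 0 ≤ c i) ∧ (∀ i, p i ∈ S) ∧ x = ∑ i, c i • p i}

/-- The inner bound `Δ_N^{N'}`: the conical hull of the images under all coarse
grainings `Ψ_f` of all realizable extreme rays of the `N'`-party subadditivity cone. -/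
def Delta (N NP : ℕ) : Set (ES N) :=
  coneHull {x | ∃ f : Option (Fin NP) → Option (Fin N),
    Function.Surjective f ∧ ∃ v ∈ Estar NP, x = Psi f v}

section Aux
open Polynomial Matrix
variable {n : Type*} [Fintype n] [DecidableEq n]




lemma charpoly_units_conj (P : (Matrix n n ℂ)ˣ) (M : Matrix n n ℂ) :
    ((P : Matrix n n ℂ) * M * ((P⁻¹ : (Matrix n n ℂ)ˣ) : Matrix n n ℂ)).charpoly = M.charpoly := by
  let f : Matrix n n ℂ →+* Matrix n n ℂ[X] := (Polynomial.C : ℂ →+* ℂ[X]).mapMatrix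
  let P' := Units.map f.toMonoidHom P
  have h1 : charmatrix ((P : Matrix n n ℂ) * M * ((P⁻¹ : (Matrix n n ℂ)ˣ) : Matrix n n ℂ))
      = (P' : Matrix n n ℂ[X]) * charmatrix M * ((P'⁻¹ : (Matrix n n ℂ[X])ˣ) : Matrix n n ℂ[X]) := by
    rw [charmatrix, charmatrix]
    have hscalar : (P' : Matrix n n ℂ[X]) * Matrix.scalar n (X : ℂ[X]) *
        ((P'⁻¹ : (Matrix n n ℂ[X])ˣ) : Matrix n n ℂ[X]) = Matrix.scalar n (X : ℂ[X]) := by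
      rw [(Matrix.scalar_commute (X : ℂ[X]) (fun r => Commute.all _ _) _).symm.eq, mul_assoc,
        Units.mul_inv, mul_one]
    have hmap : f ((P : Matrix n n ℂ) * M * ((P⁻¹ : (Matrix n n ℂ)ˣ) : Matrix n n ℂ))
        = (P' : Matrix n n ℂ[X]) * f M * ((P'⁻¹ : (Matrix n n ℂ[X])ˣ) : Matrix n n ℂ[X]) := by
      (simp only [P', map_mul f, Units.coe_map, Units.coe_map_inv, MonoidHom.coe_coe]; rfl)
    have : (RingHom.mapMatrix (Polynomial.C : ℂ →+* ℂ[X]) : Matrix n n ℂ →+* Matrix n n ℂ[X]) ((P : Matrix n n ℂ) * M * ((P⁻¹ : (Matrix n n ℂ)ˣ) : Matrix n n ℂ)) = (P' : Matrix n n ℂ[X]) * f M * ((P'⁻¹ : (Matrix n n ℂ[X])ˣ) : Matrix n n ℂ[X]) := hmap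
    rw [this]
    conv_lhs => rw [← hscalar]
    rw [mul_sub, sub_mul]
  unfold Matrix.charpoly
  rw [h1, Matrix.det_units_conj]

lemma charpoly_diagonal' (g : n → ℂ) :
    (Matrix.diagonal g).charpoly = ∏ i, (X - C (g i)) := by
  unfold Matrix.charpoly
  have : charmatrix (Matrix.diagonal g) = Matrix.diagonal (fun i => X - C (g i)) := by
    ext i j
    by_cases h : i = j
    · subst h; simp
    · simp [charmatrix_apply_ne _ _ _ h, Matrix.diagonal_apply_ne _ h]
  rw [this, Matrix.det_diagonal]

lemma roots_charpoly_conj_diag (g : n → ℝ) (P : (Matrix n n ℂ)ˣ) (M : Matrix n n ℂ)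
    (hM : M = (P : Matrix n n ℂ) * Matrix.diagonal (fun i => (g i : ℂ)) * ((P⁻¹ : (Matrix n n ℂ)ˣ) : Matrix n n ℂ)) :
    M.charpoly.roots = Finset.univ.val.map (fun i => ((g i : ℂ))) := by
  rw [hM, charpoly_units_conj, charpoly_diagonal']
  rw [show (∏ i, (X - C ((g i : ℂ)))) = ((Finset.univ.val.map fun i => ((g i : ℂ))).map fun a => X - C a).prod by
    rw [Multiset.map_map]; rfl]
  exact roots_multiset_prod_X_sub_C _



def entSum (p : Polynomial ℂ) : ℝ := -((p.roots.map (fun z => z.re * Real.log z.re)).sum)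

/-- the unit given by the eigenvector unitary -/
def eigUnit {ρ : Matrix n n ℂ} (hρ : ρ.IsHermitian) : (Matrix n n ℂ)ˣ :=
  ⟨(hρ.eigenvectorUnitary : Matrix n n ℂ), star (hρ.eigenvectorUnitary : Matrix n n ℂ),
    (Matrix.mem_unitaryGroup_iff).mp hρ.eigenvectorUnitary.2,
    (Matrix.mem_unitaryGroup_iff').mp hρ.eigenvectorUnitary.2⟩

lemma eigUnit_spec {ρ : Matrix n n ℂ} (hρ : ρ.IsHermitian) :
    ρ = ((eigUnit hρ : Matrix n n ℂ)) * Matrix.diagonal (fun i => ((hρ.eigenvalues i : ℝ) : ℂ))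
      * (((eigUnit hρ)⁻¹ : (Matrix n n ℂ)ˣ) : Matrix n n ℂ) := by
  have : (((eigUnit hρ)⁻¹ : (Matrix n n ℂ)ˣ) : Matrix n n ℂ)
      = star (hρ.eigenvectorUnitary : Matrix n n ℂ) := rfl
  rw [this]
  exact hρ.spectral_theorem

lemma trace_eq_sum_eigenvalues {ρ : Matrix n n ℂ} (hρ : ρ.IsHermitian) :
    ρ.trace = ((∑ i, hρ.eigenvalues i : ℝ) : ℂ) := by
  conv_lhs => rw [hρ.spectral_theorem]
  rw [Unitary.conjStarAlgAut_apply, Matrix.trace_mul_cycle, Unitary.coe_star_mul_self,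
    one_mul, Matrix.trace_diagonal]
  push_cast
  rfl

lemma roots_charpoly_herm {ρ : Matrix n n ℂ} (hρ : ρ.IsHermitian) :
    ρ.charpoly.roots = Finset.univ.val.map (fun i => ((hρ.eigenvalues i : ℝ) : ℂ)) :=
  roots_charpoly_conj_diag hρ.eigenvalues (eigUnit hρ) ρ (eigUnit_spec hρ)

lemma vnEntropy_eq_of_conj {ρ : Matrix n n ℂ} (hρ : ρ.IsHermitian) (g : n → ℝ)
    (P : (Matrix n n ℂ)ˣ)
    (h : ρ = (P : Matrix n n ℂ) * Matrix.diagonal (fun i => ((g i : ℝ) : ℂ)) * ((P⁻¹ : (Matrix n n ℂ)ˣ) : Matrix n n ℂ)) :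
    vnEntropy ρ = -∑ i, g i * Real.log (g i) := by
  have h1 : Finset.univ.val.map (fun i => ((hρ.eigenvalues i : ℝ) : ℂ))
      = Finset.univ.val.map (fun i => ((g i : ℝ) : ℂ)) := by
    rw [← roots_charpoly_herm hρ, roots_charpoly_conj_diag g P ρ h]
  have h2 := congrArg (fun m : Multiset ℂ => (m.map (fun z => z.re * Real.log z.re)).sum) h1
  simp only [Multiset.map_map, Function.comp, Complex.ofReal_re] at h2
  rw [vnEntropy, dif_pos hρ]
  rw [Finset.sum_eq_multiset_sum, Finset.sum_eq_multiset_sum]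
  rw [h2]

lemma vnEntropy_eq_entSum {ρ : Matrix n n ℂ} (hρ : ρ.IsHermitian) :
    vnEntropy ρ = entSum ρ.charpoly := by
  rw [vnEntropy, dif_pos hρ, entSum, roots_charpoly_herm hρ, neg_inj,
    Multiset.map_map]
  rw [Finset.sum_eq_multiset_sum]
  simp [Function.comp, Complex.ofReal_re]


lemma mul_log_mul {a b : ℝ} (ha : 0 ≤ a) (hb : 0 ≤ b) :
    (a * b) * Real.log (a * b) = b * (a * Real.log a) + a * (b * Real.log b) := by
  rcases eq_or_lt_of_le ha with h | h
  · simp [← h]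
  rcases eq_or_lt_of_le hb with h' | h'
  · simp [← h']
  rw [Real.log_mul (ne_of_gt h) (ne_of_gt h')]
  ring

lemma entSum_mul {p q : Polynomial ℂ} (hp : p ≠ 0) (hq : q ≠ 0) :
    entSum (p * q) = entSum p + entSum q := by
  rw [entSum, Polynomial.roots_mul (mul_ne_zero hp hq), Multiset.map_add, Multiset.sum_add]
  rw [entSum, entSum]
  ring

lemma entSum_X_sub_C (c : ℝ) : entSum (Polynomial.X - Polynomial.C (c : ℂ)) = -(c * Real.log c) := by
  rw [entSum, Polynomial.roots_X_sub_C]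
  simp

lemma entSum_X_pow (k : ℕ) : entSum ((Polynomial.X : Polynomial ℂ) ^ k) = 0 := by
  rw [entSum, Polynomial.roots_pow, Polynomial.roots_X]
  rw [Multiset.nsmul_singleton, Multiset.map_replicate, Multiset.sum_replicate]
  simp


lemma sum_eigenvalues_one {ρ : Matrix n n ℂ} (hd : IsDensity ρ) :
    ∑ i, hd.1.1.eigenvalues i = 1 := by
  have h2 := (trace_eq_sum_eigenvalues hd.1.1).symm.trans hd.2
  exact_mod_cast h2

lemma isHermitian_real_smul {ρ : Matrix n n ℂ} (hρ : ρ.IsHermitian) (t : ℝ) :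
    (((t : ℂ)) • ρ).IsHermitian := by
  unfold Matrix.IsHermitian
  rw [Matrix.conjTranspose_smul, hρ.eq, Complex.star_def, Complex.conj_ofReal]

lemma vnEntropy_real_smul {ρ : Matrix n n ℂ} (hd : IsDensity ρ) {t : ℝ} (ht : 0 ≤ t) :
    vnEntropy ((t : ℂ) • ρ) = t * vnEntropy ρ - t * Real.log t := by
  have hρ := hd.1.1
  have hspec : (t : ℂ) • ρ = ((eigUnit hρ : Matrix n n ℂ))
      * Matrix.diagonal (fun i => ((t * hρ.eigenvalues i : ℝ) : ℂ))
      * (((eigUnit hρ)⁻¹ : (Matrix n n ℂ)ˣ) : Matrix n n ℂ) := by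
    conv_lhs => rw [eigUnit_spec hρ]
    rw [show ((t : ℂ) • (((eigUnit hρ : Matrix n n ℂ)) * Matrix.diagonal (fun i => ((hρ.eigenvalues i : ℝ) : ℂ)) * (((eigUnit hρ)⁻¹ : (Matrix n n ℂ)ˣ) : Matrix n n ℂ)))
        = (((eigUnit hρ : Matrix n n ℂ)) * ((t : ℂ) • Matrix.diagonal (fun i => ((hρ.eigenvalues i : ℝ) : ℂ))) * (((eigUnit hρ)⁻¹ : (Matrix n n ℂ)ˣ) : Matrix n n ℂ)) by
      rw [Matrix.mul_smul, Matrix.smul_mul]]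
    congr 2
    ext i j
    rcases eq_or_ne i j with rfl | h
    · simp [Complex.ofReal_mul]
    · simp [Matrix.diagonal_apply_ne _ h]
  rw [vnEntropy_eq_of_conj (isHermitian_real_smul hρ t) _ _ hspec]
  have heig : ∀ i, 0 ≤ hρ.eigenvalues i := fun i => hd.1.eigenvalues_nonneg i
  have : ∀ i, (t * hρ.eigenvalues i) * Real.log (t * hρ.eigenvalues i)
      = hρ.eigenvalues i * (t * Real.log t) + t * (hρ.eigenvalues i * Real.log (hρ.eigenvalues i)) :=
    fun i => mul_log_mul ht (heig i)
  rw [vnEntropy, dif_pos hρ]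
  simp only [this, Finset.sum_add_distrib, ← Finset.sum_mul, ← Finset.mul_sum,
    sum_eigenvalues_one hd]
  ring

lemma isHermitian_kronecker {a b : Type*} [Fintype a] [DecidableEq a] [Fintype b] [DecidableEq b]
    {A : Matrix a a ℂ} {B : Matrix b b ℂ} (hA : A.IsHermitian) (hB : B.IsHermitian) :
    (Matrix.kroneckerMap (· * ·) A B).IsHermitian := by
  ext ⟨i, j⟩ ⟨k, l⟩
  simp only [Matrix.conjTranspose_apply, Matrix.kroneckerMap_apply, star_mul']
  rw [mul_comm, hA.apply, hB.apply, mul_comm]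

lemma vnEntropy_kronecker {a b : Type*} [Fintype a] [DecidableEq a] [Fintype b] [DecidableEq b]
    {A : Matrix a a ℂ} {B : Matrix b b ℂ} (hA : IsDensity A) (hB : IsDensity B) :
    vnEntropy (Matrix.kroneckerMap (· * ·) A B) = vnEntropy A + vnEntropy B := by
  have hAh := hA.1.1
  have hBh := hB.1.1
  let U := eigUnit hAh
  let V := eigUnit hBh
  let P : (Matrix (a × b) (a × b) ℂ)ˣ :=
    ⟨Matrix.kroneckerMap (· * ·) (U : Matrix a a ℂ) (V : Matrix b b ℂ),
     Matrix.kroneckerMap (· * ·) ((U⁻¹ : (Matrix a a ℂ)ˣ) : Matrix a a ℂ) ((V⁻¹ : (Matrix b b ℂ)ˣ) : Matrix b b ℂ),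
     by rw [← Matrix.mul_kronecker_mul]; rw [Units.mul_inv, Units.mul_inv, Matrix.one_kronecker_one],
     by rw [← Matrix.mul_kronecker_mul]; rw [Units.inv_mul, Units.inv_mul, Matrix.one_kronecker_one]⟩
  have hspec : Matrix.kroneckerMap (· * ·) A B = (P : Matrix (a × b) (a × b) ℂ)
      * Matrix.diagonal (fun p => ((hAh.eigenvalues p.1 * hBh.eigenvalues p.2 : ℝ) : ℂ))
      * ((P⁻¹ : (Matrix (a × b) (a × b) ℂ)ˣ) : Matrix (a × b) (a × b) ℂ) := by
    conv_lhs => rw [eigUnit_spec hAh, eigUnit_spec hBh]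
    rw [Matrix.mul_kronecker_mul, Matrix.mul_kronecker_mul, Matrix.diagonal_kronecker_diagonal]
    have h1 : ((P⁻¹ : (Matrix (a × b) (a × b) ℂ)ˣ) : Matrix (a × b) (a × b) ℂ)
        = Matrix.kroneckerMap (· * ·) ((U⁻¹ : (Matrix a a ℂ)ˣ) : Matrix a a ℂ) ((V⁻¹ : (Matrix b b ℂ)ˣ) : Matrix b b ℂ) := rfl
    rw [h1]
    congr 2
    funext p
    push_cast
    rfl
  rw [vnEntropy_eq_of_conj (isHermitian_kronecker hAh hBh) _ P hspec]
  have hae : ∀ i, 0 ≤ hAh.eigenvalues i := fun i => hA.1.eigenvalues_nonneg i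
  have hbe : ∀ j, 0 ≤ hBh.eigenvalues j := fun j => hB.1.eigenvalues_nonneg j
  rw [vnEntropy, dif_pos hAh, vnEntropy, dif_pos hBh]
  rw [Fintype.sum_prod_type]
  have : ∀ i j, (hAh.eigenvalues i * hBh.eigenvalues j) * Real.log (hAh.eigenvalues i * hBh.eigenvalues j)
      = hBh.eigenvalues j * (hAh.eigenvalues i * Real.log (hAh.eigenvalues i))
      + hAh.eigenvalues i * (hBh.eigenvalues j * Real.log (hBh.eigenvalues j)) :=
    fun i j => mul_log_mul (hae i) (hbe j)
  simp only [this, Finset.sum_add_distrib, ← Finset.mul_sum, ← Finset.sum_mul]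
  rw [sum_eigenvalues_one hA, sum_eigenvalues_one hB]
  ring

lemma vnEntropy_submatrix {a b : Type*} [Fintype a] [DecidableEq a] [Fintype b] [DecidableEq b]
    (e : a ≃ b) (M : Matrix b b ℂ) : vnEntropy (M.submatrix e e) = vnEntropy M := by
  by_cases h : M.IsHermitian
  · have h' : (M.submatrix e e).IsHermitian := h.submatrix e
    rw [vnEntropy_eq_entSum h, vnEntropy_eq_entSum h']
    have : M.submatrix e e = Matrix.reindex e.symm e.symm M := rfl
    rw [this, Matrix.charpoly_reindex]
  · have h' : ¬ (M.submatrix e e).IsHermitian := by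
      intro hc
      exact h (by simpa using hc.submatrix e.symm)
    rw [vnEntropy, vnEntropy, dif_neg h, dif_neg h']


section Reduce
variable {ι : Type*} [Fintype ι] [DecidableEq ι] {n : ι → Type*}
  [∀ i, Fintype (n i)] [∀ i, DecidableEq (n i)]

lemma glue_apply_mem (I : Finset ι) (x : ∀ i : I, n i.1) (z : ∀ i : (Iᶜ : Finset ι), n i.1)
    {i : ι} (hi : i ∈ I) : glue I x z i = x ⟨i, hi⟩ := dif_pos hi

lemma glue_apply_not_mem (I : Finset ι) (x : ∀ i : I, n i.1) (z : ∀ i : (Iᶜ : Finset ι), n i.1)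
    {i : ι} (hi : i ∉ I) : glue I x z i = z ⟨i, Finset.mem_compl.mpr hi⟩ := dif_neg hi

/-- split a full assignment into its `I` and `Iᶜ` parts -/
def splitAt (I : Finset ι) : (∀ i, n i) ≃ ((∀ i : I, n i.1) × (∀ i : (Iᶜ : Finset ι), n i.1)) where
  toFun w := (fun i => w i.1, fun i => w i.1)
  invFun xz := glue I xz.1 xz.2
  left_inv w := by
    funext i
    by_cases h : i ∈ I
    · exact glue_apply_mem I _ _ h
    · exact glue_apply_not_mem I _ _ h
  right_inv xz := by
    obtain ⟨x, z⟩ := xz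
    refine Prod.ext ?_ ?_
    · funext i
      show glue I x z i.1 = x i
      rw [glue_apply_mem I x z i.2]
    · funext i
      have hi : i.1 ∉ I := Finset.mem_compl.mp i.2
      show glue I x z i.1 = z i
      rw [glue_apply_not_mem I x z hi]

lemma reduce_isHermitian (ρ : Matrix (∀ i, n i) (∀ i, n i) ℂ) (hρ : ρ.IsHermitian)
    (I : Finset ι) : (reduce ρ I).IsHermitian := by
  ext x y
  simp only [Matrix.conjTranspose_apply, reduce, star_sum]
  exact Finset.sum_congr rfl fun z _ => hρ.apply _ _

lemma reduce_posSemidef (ρ : Matrix (∀ i, n i) (∀ i, n i) ℂ) (hρ : ρ.PosSemidef)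
    (I : Finset ι) : (reduce ρ I).PosSemidef := by
  obtain ⟨B, rfl⟩ : ∃ B : Matrix (∀ i, n i) (∀ i, n i) ℂ, ρ = Bᴴ * B := by
    open scoped MatrixOrder in exact CStarAlgebra.nonneg_iff_eq_star_mul_self.mp hρ.nonneg
  set C : Matrix ((∀ i, n i) × (∀ i : (Iᶜ : Finset ι), n i.1)) (∀ i : I, n i.1) ℂ :=
    fun p a => B p.1 (glue I a p.2) with hC
  have : reduce (Bᴴ * B) I = Cᴴ * C := by
    ext x y
    simp only [reduce, Matrix.mul_apply, Matrix.conjTranspose_apply]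
    simp only [hC]
    rw [Fintype.sum_prod_type]
    rw [Finset.sum_comm]
  rw [this]
  exact Matrix.posSemidef_conjTranspose_mul_self C

lemma reduce_trace (ρ : Matrix (∀ i, n i) (∀ i, n i) ℂ) (I : Finset ι) :
    (reduce ρ I).trace = ρ.trace := by
  simp only [Matrix.trace, Matrix.diag, reduce]
  rw [← Finset.sum_product', Finset.univ_product_univ]
  exact Fintype.sum_equiv (splitAt I).symm
    (fun p => ρ (glue I p.1 p.2) (glue I p.1 p.2)) (fun w => ρ w w) (fun p => rfl)

lemma reduce_isDensity (ρ : Matrix (∀ i, n i) (∀ i, n i) ℂ) (hρ : IsDensity ρ)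
    (I : Finset ι) : IsDensity (reduce ρ I) :=
  ⟨reduce_posSemidef ρ hρ.1 I, (reduce_trace ρ I).trans hρ.2⟩

end Reduce

section Reindex
variable {ι : Type*} [Fintype ι] [DecidableEq ι] {m n : ι → Type*}
  [∀ i, Fintype (m i)] [∀ i, DecidableEq (m i)] [∀ i, Fintype (n i)] [∀ i, DecidableEq (n i)]
  (e : ∀ i, m i ≃ n i)

/-- party-wise equivalence on a sub-collection indexed by a finset -/
def pwI (I : Finset ι) : (∀ i : I, m i.1) ≃ (∀ i : I, n i.1) :=
  Equiv.piCongrRight (fun i => e i.1)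

lemma glue_piCongr (I : Finset ι) (x : ∀ i : I, m i.1) (z : ∀ i : (Iᶜ : Finset ι), m i.1) :
    (fun i => e i (glue I x z i)) = glue I (pwI e I x) (pwI e Iᶜ z) := by
  funext i
  by_cases h : i ∈ I
  · rw [glue_apply_mem _ _ _ h, glue_apply_mem _ _ _ h]; rfl
  · rw [glue_apply_not_mem _ _ _ h, glue_apply_not_mem _ _ _ h]; rfl

lemma reduce_reindex (ρ : Matrix (∀ i, n i) (∀ i, n i) ℂ) (I : Finset ι) :
    reduce (ρ.submatrix (Equiv.piCongrRight e) (Equiv.piCongrRight e)) I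
      = (reduce ρ I).submatrix (pwI e I) (pwI e I) := by
  ext x y
  simp only [reduce, Matrix.submatrix_apply]
  refine Fintype.sum_equiv (pwI e Iᶜ) _ _ (fun z => ?_)
  have hx : (Equiv.piCongrRight e) (glue I x z) = glue I (pwI e I x) (pwI e Iᶜ z) :=
    glue_piCongr e I x z
  have hy : (Equiv.piCongrRight e) (glue I y z) = glue I (pwI e I y) (pwI e Iᶜ z) :=
    glue_piCongr e I y z
  rw [hx, hy]

lemma entropyVec_reindex (ρ : Matrix (∀ i, n i) (∀ i, n i) ℂ) :
    entropyVec (ρ.submatrix (Equiv.piCongrRight e) (Equiv.piCongrRight e)) = entropyVec ρ := by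
  funext J
  show vnEntropy _ = vnEntropy _
  rw [reduce_reindex e ρ J.1, vnEntropy_submatrix]

lemma isDensity_reindex (ρ : Matrix (∀ i, n i) (∀ i, n i) ℂ) (hρ : IsDensity ρ) :
    IsDensity (ρ.submatrix (Equiv.piCongrRight e) (Equiv.piCongrRight e)) := by
  refine ⟨(Matrix.posSemidef_submatrix_equiv (Equiv.piCongrRight e)).mpr hρ.1, ?_⟩
  rw [← hρ.2]
  exact Fintype.sum_equiv (Equiv.piCongrRight e) _ _ (fun w => rfl)

end Reindex

section Tensor
variable {ι : Type*} [Fintype ι] [DecidableEq ι] {m n : ι → Type*}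
  [∀ i, Fintype (m i)] [∀ i, DecidableEq (m i)] [∀ i, Fintype (n i)] [∀ i, DecidableEq (n i)]

lemma posSemidef_kronecker {a b : Type*} [Fintype a] [DecidableEq a] [Fintype b] [DecidableEq b]
    {A : Matrix a a ℂ} {B : Matrix b b ℂ} (hA : A.PosSemidef) (hB : B.PosSemidef) :
    (Matrix.kroneckerMap (· * ·) A B).PosSemidef := by
  obtain ⟨P, rfl⟩ : ∃ P : Matrix a a ℂ, A = Pᴴ * P := by
    open scoped MatrixOrder in exact CStarAlgebra.nonneg_iff_eq_star_mul_self.mp hA.nonneg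
  obtain ⟨Q, rfl⟩ : ∃ Q : Matrix b b ℂ, B = Qᴴ * Q := by
    open scoped MatrixOrder in exact CStarAlgebra.nonneg_iff_eq_star_mul_self.mp hB.nonneg
  have h : Matrix.kroneckerMap (· * ·) (Pᴴ * P) (Qᴴ * Q)
      = (Matrix.kroneckerMap (· * ·) P Q)ᴴ * (Matrix.kroneckerMap (· * ·) P Q) := by
    rw [Matrix.mul_kronecker_mul]
    congr 1
    ext ⟨i, j⟩ ⟨k, l⟩
    simp only [Matrix.conjTranspose_apply, Matrix.kroneckerMap_apply, star_mul']
  rw [h]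
  exact Matrix.posSemidef_conjTranspose_mul_self _

/-- the tensor product of two multipartite states, party-wise -/
def tensorState (ρ : Matrix (∀ i, m i) (∀ i, m i) ℂ) (σ : Matrix (∀ i, n i) (∀ i, n i) ℂ) :
    Matrix (∀ i, m i × n i) (∀ i, m i × n i) ℂ :=
  fun x y => ρ (fun i => (x i).1) (fun i => (y i).1) * σ (fun i => (x i).2) (fun i => (y i).2)

/-- distribute a pair-valued dependent function into a pair of functions -/
def splitPair {κ : Type*} {f g : κ → Type*} : (∀ j, f j × g j) ≃ (∀ j, f j) × (∀ j, g j) where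
  toFun x := (fun j => (x j).1, fun j => (x j).2)
  invFun p := fun j => (p.1 j, p.2 j)
  left_inv x := rfl
  right_inv p := rfl

lemma tensorState_eq_submatrix (ρ : Matrix (∀ i, m i) (∀ i, m i) ℂ)
    (σ : Matrix (∀ i, n i) (∀ i, n i) ℂ) :
    tensorState ρ σ = (Matrix.kroneckerMap (· * ·) ρ σ).submatrix splitPair splitPair := rfl

lemma tensorState_isDensity {ρ : Matrix (∀ i, m i) (∀ i, m i) ℂ}
    {σ : Matrix (∀ i, n i) (∀ i, n i) ℂ} (hρ : IsDensity ρ) (hσ : IsDensity σ) :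
    IsDensity (tensorState ρ σ) := by
  rw [tensorState_eq_submatrix]
  constructor
  · exact (Matrix.posSemidef_submatrix_equiv splitPair).mpr (posSemidef_kronecker hρ.1 hσ.1)
  · have h1 : ((Matrix.kroneckerMap (· * ·) ρ σ).submatrix splitPair splitPair).trace
        = (Matrix.kroneckerMap (· * ·) ρ σ).trace :=
      Fintype.sum_equiv splitPair _ _ (fun w => rfl)
    rw [h1, Matrix.trace_kronecker, hρ.2, hσ.2, mul_one]

lemma glue_fst (I : Finset ι) (x : ∀ i : I, m i.1 × n i.1) (z : ∀ i : (Iᶜ : Finset ι), m i.1 × n i.1) :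
    (fun i => (glue (n := fun i => m i × n i) I x z i).1) = glue I (fun i => (x i).1) (fun i => (z i).1) := by
  funext i
  by_cases h : i ∈ I
  · rw [glue_apply_mem _ _ _ h, glue_apply_mem _ _ _ h]
  · rw [glue_apply_not_mem _ _ _ h, glue_apply_not_mem _ _ _ h]

lemma glue_snd (I : Finset ι) (x : ∀ i : I, m i.1 × n i.1) (z : ∀ i : (Iᶜ : Finset ι), m i.1 × n i.1) :
    (fun i => (glue (n := fun i => m i × n i) I x z i).2) = glue I (fun i => (x i).2) (fun i => (z i).2) := by
  funext i
  by_cases h : i ∈ I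
  · rw [glue_apply_mem _ _ _ h, glue_apply_mem _ _ _ h]
  · rw [glue_apply_not_mem _ _ _ h, glue_apply_not_mem _ _ _ h]

lemma reduce_tensorState (ρ : Matrix (∀ i, m i) (∀ i, m i) ℂ)
    (σ : Matrix (∀ i, n i) (∀ i, n i) ℂ) (I : Finset ι) :
    reduce (tensorState ρ σ) I
      = (Matrix.kroneckerMap (· * ·) (reduce ρ I) (reduce σ I)).submatrix splitPair splitPair := by
  ext x y
  simp only [reduce, Matrix.submatrix_apply, Matrix.kroneckerMap_apply]
  rw [Finset.sum_mul_sum]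
  have hps := Fintype.sum_prod_type (f := fun p : (∀ i : (Iᶜ : Finset ι), m i.1) × (∀ i : (Iᶜ : Finset ι), n i.1) =>
        ρ (glue I (splitPair x).1 p.1) (glue I (splitPair y).1 p.1)
        * σ (glue I (splitPair x).2 p.2) (glue I (splitPair y).2 p.2))
  rw [← hps]
  refine Fintype.sum_equiv splitPair _ _ (fun z => ?_)
  simp only [tensorState]
  rw [glue_fst I x z, glue_snd I x z, glue_fst I y z, glue_snd I y z]
  rfl

lemma entropyVec_tensorState {ρ : Matrix (∀ i, m i) (∀ i, m i) ℂ}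
    {σ : Matrix (∀ i, n i) (∀ i, n i) ℂ} (hρ : IsDensity ρ) (hσ : IsDensity σ) :
    entropyVec (tensorState ρ σ) = entropyVec ρ + entropyVec σ := by
  funext J
  show vnEntropy _ = vnEntropy _ + vnEntropy _
  rw [reduce_tensorState ρ σ J.1, vnEntropy_submatrix,
    vnEntropy_kronecker (reduce_isDensity ρ hρ J.1) (reduce_isDensity σ hσ J.1)]

end Tensor

lemma Realizable.add {N : ℕ} {v w : ES N} (hv : Realizable N v) (hw : Realizable N w) :
    Realizable N (v + w) := by
  obtain ⟨d, ρ, hρ, hρv⟩ := hv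
  obtain ⟨e, σ, hσ, hσw⟩ := hw
  refine ⟨fun i => d i * e i, (tensorState ρ σ).submatrix
    (Equiv.piCongrRight fun i => (finProdFinEquiv (m := d i) (n := e i)).symm)
    (Equiv.piCongrRight fun i => (finProdFinEquiv (m := d i) (n := e i)).symm), ?_, ?_⟩
  · exact isDensity_reindex _ _ (tensorState_isDensity hρ hσ)
  · rw [entropyVec_reindex, entropyVec_tensorState hρ hσ, hρv, hσw]

section Corner
open Polynomial

lemma charpoly_one_by_one {u : Type*} [Fintype u] [DecidableEq u] [Unique u] (c : ℂ)
    (M : Matrix u u ℂ) (hM : M default default = c) :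
    M.charpoly = X - C c := by
  rw [Matrix.charpoly, Matrix.det_unique, Matrix.charmatrix_apply_eq, hM]

lemma charpoly_zero_matrix {r : Type*} [Fintype r] [DecidableEq r] :
    (0 : Matrix r r ℂ).charpoly = X ^ Fintype.card r := by
  rw [Matrix.charpoly]
  have : Matrix.charmatrix (0 : Matrix r r ℂ) = Matrix.diagonal (fun _ => (X : ℂ[X])) := by
    ext i j
    by_cases h : i = j
    · subst h; simp
    · simp [Matrix.charmatrix_apply_ne _ _ _ h, Matrix.diagonal_apply_ne _ h]
  rw [this, Matrix.det_diagonal, Finset.prod_const, Finset.card_univ]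

lemma charpoly_corner {a b : Type*} [Fintype a] [DecidableEq a] [Fintype b] [DecidableEq b]
    (A : Matrix a a ℂ) (B : Matrix b b ℂ) (e : a → b) (he : Function.Injective e)
    (p : b) (hp : ∀ u, e u ≠ p) (c : ℂ)
    (hB1 : ∀ x y, B (e x) (e y) = A x y) (hB2 : B p p = c)
    (hB0 : ∀ x y, ¬ (((∃ u, x = e u) ∧ (∃ v, y = e v)) ∨ (x = p ∧ y = p)) → B x y = 0) :
    ∃ k : ℕ, B.charpoly = A.charpoly * (X - C c) * X ^ k := by
  classical
  let r := {x : b // ¬ (∃ u, x = e u) ∧ x ≠ p}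
  let F : (a ⊕ Unit) ⊕ r → b := Sum.elim (Sum.elim e fun _ => p) Subtype.val
  have hFinj : Function.Injective F := by
    rintro ((u | u) | u) ((v | v) | v) h
    · exact congrArg _ (congrArg _ (he h))
    · exact absurd h (hp u)
    · exact absurd ⟨u, h.symm⟩ v.2.1
    · exact absurd h.symm (hp v)
    · rfl
    · exact absurd h.symm v.2.2
    · exact absurd ⟨v, h⟩ u.2.1
    · exact absurd h u.2.2
    · exact congrArg _ (Subtype.ext h)
  have hFsurj : Function.Surjective F := by
    intro x
    by_cases h1 : ∃ u, x = e u
    · obtain ⟨u, rfl⟩ := h1; exact ⟨Sum.inl (Sum.inl u), rfl⟩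
    by_cases h2 : x = p
    · exact ⟨Sum.inl (Sum.inr ()), h2.symm⟩
    · exact ⟨Sum.inr ⟨x, h1, h2⟩, rfl⟩
  let E := Equiv.ofBijective F ⟨hFinj, hFsurj⟩
  have hsub : B.submatrix F F =
      Matrix.fromBlocks
        (Matrix.fromBlocks A 0 0 (Matrix.of fun _ _ : Unit => c)) 0 0 (0 : Matrix r r ℂ) := by
    ext i j
    rcases i with (u | u) | i <;> rcases j with (v | v) | j
    · exact hB1 u v
    · exact hB0 _ _ (by rintro (⟨-, ⟨w, hw⟩⟩ | ⟨h1, -⟩); exacts [hp w hw.symm, hp u h1])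
    · exact hB0 _ _ (by rintro (⟨-, ⟨w, hw⟩⟩ | ⟨-, h2⟩); exacts [j.2.1 ⟨w, hw⟩, j.2.2 h2])
    · exact hB0 _ _ (by rintro (⟨⟨w, hw⟩, -⟩ | ⟨-, h2⟩); exacts [hp w hw.symm, hp v h2])
    · exact hB2
    · exact hB0 _ _ (by rintro (⟨⟨w, hw⟩, -⟩ | ⟨-, h2⟩); exacts [hp w hw.symm, j.2.2 h2])
    · exact hB0 _ _ (by rintro (⟨⟨w, hw⟩, -⟩ | ⟨h1, -⟩); exacts [i.2.1 ⟨w, hw⟩, i.2.2 h1])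
    · exact hB0 _ _ (by rintro (⟨⟨w, hw⟩, -⟩ | ⟨h1, -⟩); exacts [i.2.1 ⟨w, hw⟩, i.2.2 h1])
    · exact hB0 _ _ (by rintro (⟨⟨w, hw⟩, -⟩ | ⟨h1, -⟩); exacts [i.2.1 ⟨w, hw⟩, i.2.2 h1])
  have hchar : B.charpoly = (B.submatrix F F).charpoly := by
    have h1 : B.submatrix F F = Matrix.reindex E.symm E.symm B := rfl
    rw [h1, Matrix.charpoly_reindex]
  refine ⟨Fintype.card r, ?_⟩
  rw [hchar, hsub, Matrix.charpoly_fromBlocks_zero₂₁, Matrix.charpoly_fromBlocks_zero₂₁,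
    charpoly_one_by_one c (Matrix.of fun _ _ : Unit => c) rfl, charpoly_zero_matrix]

end Corner

section Dilute
open Polynomial

variable {κ : Type*} [Fintype κ] [DecidableEq κ] {f : κ → Type*}
  [∀ j, Fintype (f j)] [∀ j, DecidableEq (f j)]

/-- all components are in the "left" (original) part -/
def allL (x : ∀ j, f j ⊕ Unit) : Prop := ∀ j, (x j).isLeft

instance (x : ∀ j, f j ⊕ Unit) : Decidable (allL x) :=
  Fintype.decidableForallFintype (α := κ)

/-- embed an assignment into the enlarged spaces -/
def encS (a : ∀ j, f j) : ∀ j, f j ⊕ Unit := fun j => Sum.inl (a j)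

/-- the extra pure-state point -/
def pS : ∀ j, f j ⊕ Unit := fun _ => Sum.inr ()

/-- decode an all-left assignment -/
def decS (x : ∀ j, f j ⊕ Unit) (h : allL x) : ∀ j, f j := fun j => (x j).getLeft (h j)

lemma allL_encS (a : ∀ j, f j) : allL (encS a) := fun _ => rfl

lemma decS_encS (a : ∀ j, f j) (h : allL (encS a)) : decS (encS a) h = a := rfl

lemma encS_decS (x : ∀ j, f j ⊕ Unit) (h : allL x) : encS (decS x h) = x := by
  funext j
  show Sum.inl ((x j).getLeft (h j)) = x j
  exact Sum.inl_getLeft _ _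

lemma encS_injective : Function.Injective (encS (f := f)) := by
  intro a b h
  funext j
  exact Sum.inl.inj (congrFun h j)

lemma encS_ne_pS [Nonempty κ] (a : ∀ j, f j) : encS a ≠ pS := by
  intro h
  obtain ⟨j⟩ := ‹Nonempty κ›
  exact Sum.inl_ne_inr (congrFun h j)

lemma not_allL_pS [Nonempty κ] : ¬ allL (pS (f := f)) := by
  intro h
  obtain ⟨j⟩ := ‹Nonempty κ›
  exact Bool.noConfusion (h j : (Sum.inr () : f j ⊕ Unit).isLeft)

lemma sum_allL (F : (∀ j, f j ⊕ Unit) → ℂ) (h0 : ∀ x, ¬ allL x → F x = 0) :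
    ∑ x, F x = ∑ a : ∀ j, f j, F (encS a) := by
  classical
  have h1 : ∑ x ∈ Finset.univ.image (encS (f := f)), F x = ∑ a, F (encS a) :=
    Finset.sum_image (fun a _ b _ h => encS_injective h)
  rw [← h1]
  refine (Finset.sum_subset (Finset.subset_univ _) ?_).symm
  intro x _ hx
  refine h0 x fun hall => hx ?_
  exact Finset.mem_image.mpr ⟨decS x hall, Finset.mem_univ _, encS_decS x hall⟩

lemma sum_allL_p [Nonempty κ] (F : (∀ j, f j ⊕ Unit) → ℂ)
    (h0 : ∀ x, ¬ allL x → x ≠ pS → F x = 0) :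
    ∑ x, F x = (∑ a : ∀ j, f j, F (encS a)) + F pS := by
  classical
  have hpnotmem : pS ∉ Finset.univ.image (encS (f := f)) := by
    intro h
    obtain ⟨a, -, ha⟩ := Finset.mem_image.mp h
    exact encS_ne_pS a ha
  have h1 : ∑ x ∈ insert (pS (f := f)) (Finset.univ.image (encS (f := f))), F x
      = (∑ a, F (encS a)) + F pS := by
    rw [Finset.sum_insert hpnotmem,
      Finset.sum_image (fun a _ b _ h => encS_injective h), add_comm]
  rw [← h1]
  refine (Finset.sum_subset (Finset.subset_univ _) ?_).symm
  intro x _ hx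
  have hx1 : x ≠ pS := fun h => hx (h ▸ Finset.mem_insert_self _ _)
  refine h0 x (fun hall => hx ?_) hx1
  exact Finset.mem_insert.mpr (Or.inr
    (Finset.mem_image.mpr ⟨decS x hall, Finset.mem_univ _, encS_decS x hall⟩))

end Dilute

section DiluteState
open Polynomial

variable {ι : Type*} [Fintype ι] [DecidableEq ι] {n : ι → Type*}
  [∀ i, Fintype (n i)] [∀ i, DecidableEq (n i)]

/-- the diluted state `t ρ ⊕ (1-t) |e⟩⟨e|` -/
def dilute (t : ℝ) (ρ : Matrix (∀ i, n i) (∀ i, n i) ℂ) :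
    Matrix (∀ i, n i ⊕ Unit) (∀ i, n i ⊕ Unit) ℂ :=
  fun x y =>
    if hx : allL x then
      if hy : allL y then (t : ℂ) * ρ (decS x hx) (decS y hy) else 0
    else if x = pS ∧ y = pS then ((1 - t : ℝ) : ℂ) else 0

lemma dilute_enc (t : ℝ) (ρ : Matrix (∀ i, n i) (∀ i, n i) ℂ) (a b : ∀ i, n i) :
    dilute t ρ (encS a) (encS b) = (t : ℂ) * ρ a b := by
  rw [dilute, dif_pos (allL_encS a), dif_pos (allL_encS b), decS_encS, decS_encS]

lemma dilute_pS [Nonempty ι] (t : ℝ) (ρ : Matrix (∀ i, n i) (∀ i, n i) ℂ) :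
    dilute t ρ pS pS = ((1 - t : ℝ) : ℂ) := by
  rw [dilute, dif_neg not_allL_pS, if_pos ⟨rfl, rfl⟩]

lemma dilute_notL_left (t : ℝ) (ρ : Matrix (∀ i, n i) (∀ i, n i) ℂ)
    {x y : ∀ i, n i ⊕ Unit} (hx : ¬ allL x) (hxp : x ≠ pS) : dilute t ρ x y = 0 := by
  rw [dilute, dif_neg hx, if_neg (fun h => hxp h.1)]

lemma dilute_notL_right (t : ℝ) (ρ : Matrix (∀ i, n i) (∀ i, n i) ℂ)
    {x y : ∀ i, n i ⊕ Unit} (hy : ¬ allL y) (hyp : y ≠ pS) : dilute t ρ x y = 0 := by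
  rw [dilute]
  by_cases hx : allL x
  · rw [dif_pos hx, dif_neg hy]
  · rw [dif_neg hx, if_neg (fun h => hyp h.2)]

lemma dilute_isHermitian {ρ : Matrix (∀ i, n i) (∀ i, n i) ℂ} (hρ : ρ.IsHermitian) (t : ℝ) :
    (dilute t ρ).IsHermitian := by
  ext x y
  show star (dilute t ρ y x) = dilute t ρ x y
  rw [dilute, dilute]
  by_cases hx : allL x <;> by_cases hy : allL y
  · simp only [dif_pos hx, dif_pos hy]
    rw [star_mul', hρ.apply, Complex.star_def, Complex.conj_ofReal, mul_comm]
  · simp only [dif_pos hx, dif_neg hy]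
    rw [if_neg (fun h : y = pS ∧ x = pS => hy (by rw [h.1, ← h.2]; exact hx)), star_zero]
  · simp only [dif_neg hx, dif_pos hy]
    rw [if_neg (fun h : x = pS ∧ y = pS => hx (by rw [h.1, ← h.2]; exact hy)), star_zero]
  · simp only [dif_neg hx, dif_neg hy]
    by_cases hxy : x = pS ∧ y = pS
    · rw [if_pos ⟨hxy.2, hxy.1⟩, if_pos hxy, Complex.star_def, Complex.conj_ofReal]
    · rw [if_neg (fun h => hxy ⟨h.2, h.1⟩), if_neg hxy, star_zero]

lemma dilute_trace [Nonempty ι] (ρ : Matrix (∀ i, n i) (∀ i, n i) ℂ) (t : ℝ) :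
    (dilute t ρ).trace = (t : ℂ) * ρ.trace + ((1 - t : ℝ) : ℂ) := by
  show ∑ x, dilute t ρ x x = _
  rw [sum_allL_p (fun x => dilute t ρ x x) (fun x hx hxp => dilute_notL_left t ρ hx hxp)]
  rw [dilute_pS]
  congr 1
  rw [Matrix.trace, Finset.mul_sum]
  exact Finset.sum_congr rfl fun a _ => dilute_enc t ρ a a

lemma dilute_posSemidef [Nonempty ι] {ρ : Matrix (∀ i, n i) (∀ i, n i) ℂ}
    (hρ : ρ.PosSemidef) {t : ℝ} (ht0 : 0 ≤ t) (ht1 : t ≤ 1) : (dilute t ρ).PosSemidef := by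
  refine Matrix.PosSemidef.of_dotProduct_mulVec_nonneg (dilute_isHermitian hρ.1 t) fun x => ?_
  have key : (star x) ⬝ᵥ (dilute t ρ).mulVec x
      = (t : ℂ) * ((star (x ∘ encS)) ⬝ᵥ ρ.mulVec (x ∘ encS))
        + ((1 - t : ℝ) : ℂ) * (star (x pS) * x pS) := by
    rw [dotProduct]
    rw [sum_allL_p (fun w => star x w * (dilute t ρ).mulVec x w) ?side]
    case side =>
      intro w hw hwp
      have h9 : (dilute t ρ).mulVec x w = 0 := by
        rw [Matrix.mulVec, dotProduct]
        exact Finset.sum_eq_zero fun w' _ => by rw [dilute_notL_left t ρ hw hwp, zero_mul]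
      show star x w * (dilute t ρ).mulVec x w = 0
      rw [h9, mul_zero]
    have henc : ∀ a : ∀ i, n i, (dilute t ρ).mulVec x (encS a)
        = (t : ℂ) * (ρ.mulVec (x ∘ encS)) a := by
      intro a
      rw [Matrix.mulVec, dotProduct]
      rw [sum_allL (fun w' => dilute t ρ (encS a) w' * x w') ?side2]
      case side2 =>
        intro w' hw'
        show dilute t ρ (encS a) w' * x w' = 0
        rw [dilute, dif_pos (allL_encS a), dif_neg hw', zero_mul]
      rw [Matrix.mulVec, dotProduct, Finset.mul_sum]
      refine Finset.sum_congr rfl fun b _ => ?_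
      rw [dilute_enc, Function.comp_apply, mul_assoc]
    have hps : (dilute t ρ).mulVec x pS = ((1 - t : ℝ) : ℂ) * x pS := by
      rw [Matrix.mulVec, dotProduct]
      have : ∀ w', dilute t ρ pS w' * x w'
          = if w' = pS then ((1 - t : ℝ) : ℂ) * x w' else 0 := by
        intro w'
        by_cases h : w' = pS
        · subst h; rw [if_pos rfl, dilute_pS]
        · rw [if_neg h, dilute, dif_neg not_allL_pS, if_neg (fun hh => h hh.2), zero_mul]
      rw [Finset.sum_congr rfl fun w' _ => this w', Finset.sum_ite_eq' Finset.univ pS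
        (fun w' => ((1 - t : ℝ) : ℂ) * x w'), if_pos (Finset.mem_univ _)]
    rw [Finset.sum_congr rfl (fun a _ => by
      show star x (encS a) * (dilute t ρ).mulVec x (encS a) = star x (encS a) * ((t : ℂ) * (ρ.mulVec (x ∘ encS)) a)
      rw [henc a])]
    show (∑ a, star x (encS a) * ((t : ℂ) * (ρ.mulVec (x ∘ encS)) a)) + star x pS * (dilute t ρ).mulVec x pS = _
    rw [hps]
    rw [dotProduct, Finset.mul_sum]
    congr 1
    · refine Finset.sum_congr rfl fun a _ => ?_
      simp only [Pi.star_apply, Function.comp_apply]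
      ring
    · simp only [Pi.star_apply]
      ring
  rw [key]
  have h1 : (0 : ℂ) ≤ (t : ℂ) := Complex.zero_le_real.mpr ht0
  have h2 : (0 : ℂ) ≤ ((1 - t : ℝ) : ℂ) := Complex.zero_le_real.mpr (by linarith)
  exact add_nonneg (mul_nonneg h1 (hρ.dotProduct_mulVec_nonneg _)) (mul_nonneg h2 (star_mul_self_nonneg _))

lemma dilute_isDensity [Nonempty ι] {ρ : Matrix (∀ i, n i) (∀ i, n i) ℂ}
    (hρ : IsDensity ρ) {t : ℝ} (ht0 : 0 ≤ t) (ht1 : t ≤ 1) : IsDensity (dilute t ρ) := by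
  refine ⟨dilute_posSemidef hρ.1 ht0 ht1, ?_⟩
  rw [dilute_trace, hρ.2, mul_one]
  push_cast
  ring

end DiluteState

section DiluteEntropy
open Polynomial

/-- the binary entropy function -/
def Hbin (t : ℝ) : ℝ := -(t * Real.log t) - (1 - t) * Real.log (1 - t)

variable {ι : Type*} [Fintype ι] [DecidableEq ι] {n : ι → Type*}
  [∀ i, Fintype (n i)] [∀ i, DecidableEq (n i)]

lemma glue_encS (I : Finset ι) (x : ∀ i : I, n i.1) (z : ∀ i : (Iᶜ : Finset ι), n i.1) :
    glue (n := fun i => n i ⊕ Unit) I (encS x) (encS z) = encS (glue I x z) := by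
  funext i
  by_cases h : i ∈ I
  · rw [glue_apply_mem (n := fun i => n i ⊕ Unit) I _ _ h]
    show _ = Sum.inl (glue I x z i)
    rw [glue_apply_mem I x z h]
    rfl
  · rw [glue_apply_not_mem (n := fun i => n i ⊕ Unit) I _ _ h]
    show _ = Sum.inl (glue I x z i)
    rw [glue_apply_not_mem I x z h]
    rfl

lemma glue_pS (I : Finset ι) :
    glue (n := fun i => n i ⊕ Unit) I pS pS = pS := by
  funext i
  by_cases h : i ∈ I
  · rw [glue_apply_mem (n := fun i => n i ⊕ Unit) I _ _ h]; rfl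
  · rw [glue_apply_not_mem (n := fun i => n i ⊕ Unit) I _ _ h]; rfl

lemma allL_glue_iff (I : Finset ι) (x : ∀ i : I, n i.1 ⊕ Unit)
    (z : ∀ i : (Iᶜ : Finset ι), n i.1 ⊕ Unit) :
    allL (glue (n := fun i => n i ⊕ Unit) I x z) ↔ allL x ∧ allL z := by
  constructor
  · intro h
    refine ⟨fun i => ?_, fun i => ?_⟩
    · have := h i.1
      rwa [glue_apply_mem (n := fun i => n i ⊕ Unit) I _ _ i.2] at this
    · have := h i.1
      rwa [glue_apply_not_mem (n := fun i => n i ⊕ Unit) I _ _ (Finset.mem_compl.mp i.2)] at this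
  · rintro ⟨h1, h2⟩ i
    by_cases h : i ∈ I
    · rw [glue_apply_mem (n := fun i => n i ⊕ Unit) I _ _ h]; exact h1 _
    · rw [glue_apply_not_mem (n := fun i => n i ⊕ Unit) I _ _ h]; exact h2 _

lemma glue_eq_pS_left (I : Finset ι) {x : ∀ i : I, n i.1 ⊕ Unit}
    {z : ∀ i : (Iᶜ : Finset ι), n i.1 ⊕ Unit}
    (h : glue (n := fun i => n i ⊕ Unit) I x z = pS) : x = pS := by
  funext i
  have := congrFun h i.1
  rwa [glue_apply_mem (n := fun i => n i ⊕ Unit) I _ _ i.2] at this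

lemma glue_eq_pS_right (I : Finset ι) {x : ∀ i : I, n i.1 ⊕ Unit}
    {z : ∀ i : (Iᶜ : Finset ι), n i.1 ⊕ Unit}
    (h : glue (n := fun i => n i ⊕ Unit) I x z = pS) : z = pS := by
  funext i
  have := congrFun h i.1
  rwa [glue_apply_not_mem (n := fun i => n i ⊕ Unit) I _ _ (Finset.mem_compl.mp i.2)] at this

variable (t : ℝ) (ρ : Matrix (∀ i, n i) (∀ i, n i) ℂ)

lemma reduce_dilute_enc (I : Finset ι) [Nonempty I] (a b : ∀ i : I, n i.1) :
    reduce (dilute t ρ) I (encS a) (encS b) = (t : ℂ) * reduce ρ I a b := by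
  haveI : Nonempty ι := ⟨(Classical.arbitrary I).1⟩
  show ∑ z, dilute t ρ (glue I (encS a) z) (glue I (encS b) z) = _
  rw [sum_allL (fun z => dilute t ρ (glue I (encS a) z) (glue I (encS b) z)) ?h0]
  case h0 =>
    intro z hz
    refine dilute_notL_left t ρ ?_ ?_
    · intro hall; exact hz ((allL_glue_iff I _ z).mp hall).2
    · intro hps; exact encS_ne_pS a (glue_eq_pS_left I hps)
  rw [reduce, Finset.mul_sum]
  refine Finset.sum_congr rfl fun w _ => ?_
  show dilute t ρ (glue I (encS a) (encS w)) (glue I (encS b) (encS w))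
      = (t : ℂ) * ρ (glue I a w) (glue I b w)
  rw [glue_encS, glue_encS, dilute_enc]

lemma reduce_dilute_pS (I : Finset ι) [Nonempty I] :
    reduce (dilute t ρ) I pS pS = ((1 - t : ℝ) : ℂ) := by
  haveI : Nonempty ι := ⟨(Classical.arbitrary I).1⟩
  show ∑ z, dilute t ρ (glue I pS z) (glue I pS z) = _
  have hterm : ∀ z, dilute t ρ (glue I pS z) (glue I pS z)
      = if z = pS then ((1 - t : ℝ) : ℂ) else 0 := by
    intro z
    by_cases hz : z = pS
    · subst hz; rw [if_pos rfl, glue_pS, dilute_pS]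
    · rw [if_neg hz]
      refine dilute_notL_left t ρ ?_ ?_
      · intro hall; exact not_allL_pS (((allL_glue_iff I _ z).mp hall).1)
      · intro hps; exact hz (glue_eq_pS_right I hps)
  rw [Finset.sum_congr rfl fun z _ => hterm z,
    Finset.sum_ite_eq' Finset.univ pS (fun _ => ((1 - t : ℝ) : ℂ)), if_pos (Finset.mem_univ _)]

lemma reduce_dilute_zero (I : Finset ι) [Nonempty I] (x y : ∀ i : I, n i.1 ⊕ Unit)
    (hxy : ¬ (((∃ u, x = encS u) ∧ (∃ v, y = encS v)) ∨ (x = pS ∧ y = pS))) :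
    reduce (dilute t ρ) I x y = 0 := by
  show ∑ z, dilute t ρ (glue I x z) (glue I y z) = 0
  refine Finset.sum_eq_zero fun z _ => ?_
  by_cases hx : allL x
  · by_cases hy : allL y
    · exact absurd (Or.inl ⟨⟨decS x hx, (encS_decS x hx).symm⟩,
        ⟨decS y hy, (encS_decS y hy).symm⟩⟩) hxy
    · by_cases hgx : allL (glue (n := fun i => n i ⊕ Unit) I x z)
      · rw [dilute, dif_pos hgx, dif_neg (fun hall => hy ((allL_glue_iff I y z).mp hall).1)]
      · rw [dilute, dif_neg hgx,
          if_neg (fun h => not_allL_pS ((glue_eq_pS_left I h.1) ▸ hx))]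
  · by_cases hxp : x = pS
    · have hyn : ¬ (y = pS) := fun hyp => hxy (Or.inr ⟨hxp, hyp⟩)
      rw [dilute, dif_neg (fun hall => hx ((allL_glue_iff I x z).mp hall).1),
        if_neg (fun h => hyn (glue_eq_pS_left I h.2))]
    · exact dilute_notL_left t ρ (fun hall => hx ((allL_glue_iff I x z).mp hall).1)
        (fun hps => hxp (glue_eq_pS_left I hps))

lemma vnEntropy_reduce_dilute {ρ : Matrix (∀ i, n i) (∀ i, n i) ℂ} (hρ : IsDensity ρ)
    {t : ℝ} (ht0 : 0 ≤ t) (I : Finset ι) (hI : I.Nonempty) :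
    vnEntropy (reduce (dilute t ρ) I) = t * vnEntropy (reduce ρ I) + Hbin t := by
  haveI : Nonempty I := ⟨⟨hI.choose, hI.choose_spec⟩⟩
  obtain ⟨k, hcp⟩ := charpoly_corner ((t : ℂ) • reduce ρ I) (reduce (dilute t ρ) I)
    encS encS_injective pS (fun u => encS_ne_pS u) ((1 - t : ℝ) : ℂ)
    (fun a b => by rw [reduce_dilute_enc]; rfl)
    (reduce_dilute_pS t ρ I)
    (reduce_dilute_zero t ρ I)
  have hherm : (reduce (dilute t ρ) I).IsHermitian :=
    reduce_isHermitian _ (dilute_isHermitian hρ.1.1 t) I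
  have hX1 : (X - C ((1 - t : ℝ) : ℂ)) ≠ 0 := Polynomial.X_sub_C_ne_zero _
  have hX2 : ((X : ℂ[X]) ^ k) ≠ 0 := pow_ne_zero _ Polynomial.X_ne_zero
  rw [vnEntropy_eq_entSum hherm, hcp,
    entSum_mul (mul_ne_zero (Matrix.charpoly_monic _).ne_zero hX1) hX2,
    entSum_mul (Matrix.charpoly_monic _).ne_zero hX1, entSum_X_pow, entSum_X_sub_C,
    ← vnEntropy_eq_entSum (isHermitian_real_smul (reduce_isHermitian ρ hρ.1.1 I) t),
    vnEntropy_real_smul (reduce_isDensity ρ hρ I) ht0, Hbin]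
  ring

lemma entropyVec_dilute [Nonempty ι] {ρ : Matrix (∀ i, n i) (∀ i, n i) ℂ} (hρ : IsDensity ρ)
    {t : ℝ} (ht0 : 0 ≤ t) :
    entropyVec (dilute t ρ) = fun J => t * entropyVec ρ J + Hbin t := by
  funext J
  exact vnEntropy_reduce_dilute hρ ht0 J.1 J.2

end DiluteEntropy

lemma realizable_dilute {N : ℕ} (hN : 0 < N) {v : ES N} (hv : Realizable N v) {t : ℝ}
    (ht0 : 0 ≤ t) (ht1 : t ≤ 1) :
    Realizable N (fun J => t * v J + Hbin t) := by
  obtain ⟨d, ρ, hρ, hvec⟩ := hv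
  haveI : Nonempty (Fin N) := ⟨⟨0, hN⟩⟩
  refine ⟨fun i => d i + 1, (dilute t ρ).submatrix
    (Equiv.piCongrRight fun i => ((finSumFinEquiv (m := d i) (n := 1)).symm.trans
      (Equiv.sumCongr (Equiv.refl (Fin (d i))) (Equiv.ofUnique (Fin 1) Unit))))
    (Equiv.piCongrRight fun i => ((finSumFinEquiv (m := d i) (n := 1)).symm.trans
      (Equiv.sumCongr (Equiv.refl (Fin (d i))) (Equiv.ofUnique (Fin 1) Unit)))), ?_, ?_⟩
  · exact isDensity_reindex _ _ (dilute_isDensity hρ ht0 ht1)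
  · rw [entropyVec_reindex, entropyVec_dilute hρ ht0, hvec]

lemma vnEntropy_one {β : Type*} [Fintype β] [DecidableEq β] :
    vnEntropy (1 : Matrix β β ℂ) = 0 := by
  have h1 : (1 : Matrix β β ℂ) = ((1 : (Matrix β β ℂ)ˣ) : Matrix β β ℂ)
      * Matrix.diagonal (fun _ : β => ((1 : ℝ) : ℂ))
      * (((1 : (Matrix β β ℂ)ˣ)⁻¹ : (Matrix β β ℂ)ˣ) : Matrix β β ℂ) := by
    simp
  rw [vnEntropy_eq_of_conj Matrix.isHermitian_one (fun _ => (1 : ℝ)) 1 h1]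
  simp

lemma realizable_zero (N : ℕ) : Realizable N 0 := by
  refine ⟨fun _ => 1, (1 : Matrix (∀ i : Fin N, Fin 1) (∀ i : Fin N, Fin 1) ℂ),
    ⟨Matrix.PosSemidef.one, ?_⟩, ?_⟩
  · rw [Matrix.trace_one]
    simp
  · funext J
    show vnEntropy (reduce (1 : Matrix (∀ i : Fin N, Fin 1) (∀ i : Fin N, Fin 1) ℂ) J.1) = 0
    have hred : reduce (1 : Matrix (∀ i : Fin N, Fin 1) (∀ i : Fin N, Fin 1) ℂ) J.1 = 1 := by
      have htr := reduce_trace (1 : Matrix (∀ i : Fin N, Fin 1) (∀ i : Fin N, Fin 1) ℂ) J.1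
      rw [Matrix.trace_one, show (Fintype.card (∀ i : Fin N, Fin 1) : ℂ) = 1 by simp] at htr
      ext x y
      have hxy : x = y := Subsingleton.elim x y
      subst hxy
      rw [Matrix.one_apply_eq, ← htr, Matrix.trace]
      rw [Finset.sum_eq_single_of_mem x (Finset.mem_univ x)
        (fun b _ hb => absurd (Subsingleton.elim b x) hb)]
      rfl
    rw [hred, vnEntropy_one]

lemma realizable_natCast_smul {N : ℕ} (m : ℕ) {v : ES N} (hv : Realizable N v) :
    Realizable N ((m : ℝ) • v) := by
  induction m with
  | zero => simpa using realizable_zero N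
  | succ m ih =>
    have h := Realizable.add ih hv
    have : ((m : ℝ) • v + v) = (((m + 1 : ℕ) : ℝ) • v) := by
      push_cast
      rw [add_smul, one_smul]
    rwa [this] at h

lemma Hbin_zero : Hbin 0 = 0 := by simp [Hbin]

lemma continuous_Hbin : Continuous Hbin := by
  unfold Hbin
  exact (Real.continuous_mul_log.neg).sub
    (Real.continuous_mul_log.comp (continuous_const.sub continuous_id))

lemma realizable_all_of_zero (v : ES 0) : Realizable 0 v := by
  haveI : IsEmpty {I : Finset (Fin 0) // I.Nonempty} :=
    ⟨fun ⟨I, hI⟩ => hI.ne_empty (Finset.eq_empty_of_isEmpty I)⟩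
  have h0 : v = 0 := funext fun x => isEmptyElim x
  rw [h0]
  exact realizable_zero 0

lemma realizable_smul_mem_closure {N : ℕ} {v : ES N} (hv : Realizable N v) {c : ℝ}
    (hc0 : 0 ≤ c) (hc1 : c ≤ 1) : c • v ∈ closure {w : ES N | Realizable N w} := by
  rcases Nat.eq_zero_or_pos N with hN | hN
  · subst hN
    exact subset_closure (realizable_all_of_zero _)
  have key : ∀ k : ℕ,
      (c • v + Hbin (c / ((k : ℝ) + 1)) • (fun _ => (1 : ℝ) : ES N)) ∈ {w : ES N | Realizable N w} := by
    intro k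
    have hk1 : (0 : ℝ) < (k : ℝ) + 1 := by positivity
    have ht0 : 0 ≤ c / ((k : ℝ) + 1) := div_nonneg hc0 hk1.le
    have hkge : (1 : ℝ) ≤ (k : ℝ) + 1 := by
      have : (0 : ℝ) ≤ (k : ℝ) := Nat.cast_nonneg k
      linarith
    have ht1 : c / ((k : ℝ) + 1) ≤ 1 := by
      rw [div_le_one hk1]
      linarith
    have h2 := realizable_dilute hN (realizable_natCast_smul (k + 1) hv) ht0 ht1
    have h3 : (fun J => (c / ((k : ℝ) + 1)) * (((k + 1 : ℕ) : ℝ) • v) J + Hbin (c / ((k : ℝ) + 1)))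
        = (c • v + Hbin (c / ((k : ℝ) + 1)) • (fun _ => (1 : ℝ) : ES N)) := by
      funext J
      show (c / ((k : ℝ) + 1)) * (((k + 1 : ℕ) : ℝ) * v J) + Hbin (c / ((k : ℝ) + 1))
          = c * v J + Hbin (c / ((k : ℝ) + 1)) * 1
      rw [mul_one]
      congr 1
      push_cast
      rw [← mul_assoc, div_mul_cancel₀ c (ne_of_gt hk1)]
    rw [← h3]
    exact h2
  have h1 : Filter.Tendsto (fun k : ℕ => c / ((k : ℝ) + 1)) Filter.atTop (nhds 0) := by
    have h0 := tendsto_one_div_add_atTop_nhds_zero_nat (𝕜 := ℝ)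
    have h0' := h0.const_mul c
    rw [mul_zero] at h0'
    refine h0'.congr fun k => ?_
    rw [mul_one_div]
  have h2 : Filter.Tendsto (fun k : ℕ => Hbin (c / ((k : ℝ) + 1))) Filter.atTop (nhds 0) := by
    have := (continuous_Hbin.tendsto 0).comp h1
    rwa [Hbin_zero] at this
  have h3 := Filter.Tendsto.add (tendsto_const_nhds (x := c • v) (f := Filter.atTop (α := ℕ)))
    (h2.smul_const ((fun _ => (1 : ℝ)) : ES N))
  rw [zero_smul, add_zero] at h3
  exact mem_closure_of_tendsto h3 (Filter.Eventually.of_forall key)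

end Aux

/-- The conical hull of any set of realizable `N`-party entropy vectors is contained
in the closure of the set `Σ*_N` of realizable entropy vectors; i.e. the closure of
`Σ*_N` is a convex cone. -/
theorem closure_realizable_convexCone (N : ℕ) :
    (∀ S : Set (ES N), S ⊆ {v | Realizable N v} →
      coneHull S ⊆ closure {v | Realizable N v}) ∧
    Convex ℝ (closure {v | Realizable N v}) ∧
    (∀ c : ℝ, 0 ≤ c → ∀ v ∈ closure {v | Realizable N v},
      c • v ∈ closure {v | Realizable N v}) := by
  classical
  set R := {v : ES N | Realizable N v} with hR
  have hz : (0 : ES N) ∈ R := realizable_zero N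
  have hadd : ∀ x ∈ R, ∀ y ∈ R, x + y ∈ R := fun x hx y hy => Realizable.add hx hy
  have haddc : ∀ x ∈ closure R, ∀ y ∈ closure R, x + y ∈ closure R := fun x hx y hy =>
    map_mem_closure₂ continuous_add hx hy hadd
  have hsmulR : ∀ c : ℝ, 0 ≤ c → ∀ v ∈ R, c • v ∈ closure R := by
    intro c hc v hv
    have h1 : (0 : ℝ) ≤ c - (⌊c⌋₊ : ℝ) := by
      have := Nat.floor_le hc
      linarith
    have h2 : c - (⌊c⌋₊ : ℝ) ≤ 1 := by
      have := Nat.lt_floor_add_one c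
      linarith
    have hdecomp : c • v = (⌊c⌋₊ : ℝ) • v + (c - (⌊c⌋₊ : ℝ)) • v := by
      rw [← add_smul]
      ring_nf
    rw [hdecomp]
    exact haddc _ (subset_closure (realizable_natCast_smul ⌊c⌋₊ hv)) _
      (realizable_smul_mem_closure hv h1 h2)
  have hsmulC : ∀ c : ℝ, 0 ≤ c → ∀ v ∈ closure R, c • v ∈ closure R := by
    intro c hc v hv
    have h1 : c • v ∈ (fun w : ES N => c • w) '' (closure R) := ⟨v, hv, rfl⟩
    have h2 := image_closure_subset_closure_image
      (f := fun w : ES N => c • w) (s := R) (continuous_const_smul c)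
    have h3 : (fun w : ES N => c • w) '' R ⊆ closure R := by
      rintro _ ⟨w, hw, rfl⟩
      exact hsmulR c hc w hw
    exact closure_minimal h3 isClosed_closure (h2 h1)
  refine ⟨?_, ?_, fun c hc v hv => hsmulC c hc v hv⟩
  · intro S hS x hx
    obtain ⟨k, cc, p, hcc, hp, rfl⟩ := hx
    exact Finset.sum_induction _ (· ∈ closure R) (fun a b ha hb => haddc a ha b hb)
      (subset_closure hz) (fun i _ => hsmulR (cc i) (hcc i) (p i) (hS (hp i)))
  · intro x hx y hy a b ha hb hab
    exact haddc _ (hsmulC a ha x hx) _ (hsmulC b hb y hy)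

end QIT
end
end

section
/- Let f : {0,1,...,N'} → {0,1,...,N} be a surjective coarse-graining map. The induced linear map Ψ_f on entropy space, defined by (Ψ_f v)_I = v_{f^{-1}(I)} (interpreting subsets containing the purifier 0 via their complements), maps the entropy vector of any pure-state extension of an N'-party density matrix ρ to the entropy vector of the same state regarded as an N-party state under the coarse graining f. -/
open scoped BigOperators ComplexOrder

noncomputable section

namespace QIT

open Polynomial Matrix in
private lemma evalCharpoly {R : Type*} [CommRing R] {p : Type*} [Fintype p] [DecidableEq p]
    (P : Matrix p p R) (s : R) :
    P.charpoly.eval s = Matrix.det (s • (1 : Matrix p p R) - P) := by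
  rw [Matrix.charpoly, ← Polynomial.coe_evalRingHom, RingHom.map_det]
  congr 1
  ext i j
  by_cases h : i = j <;> simp [Matrix.charmatrix, h, Matrix.one_apply]

open Polynomial Matrix in
private lemma charpolyTranspose {p : Type*} [Fintype p] [DecidableEq p]
    (P : Matrix p p ℂ) : P.transpose.charpoly = P.charpoly := by
  apply Polynomial.funext
  intro s
  rw [evalCharpoly, evalCharpoly, ← Matrix.det_transpose (s • 1 - P)]
  congr 1
  rw [Matrix.transpose_sub, Matrix.transpose_smul, Matrix.transpose_one]

open Polynomial Matrix in
private lemma charpolyMulXPow {m k : Type*} [Fintype m] [DecidableEq m] [Fintype k]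
    [DecidableEq k] (M : Matrix m k ℂ) (N : Matrix k m ℂ) :
    (M * N).charpoly * X ^ (Fintype.card k) = (N * M).charpoly * X ^ (Fintype.card m) := by
  apply Polynomial.eq_of_infinite_eval_eq
  apply Set.Infinite.mono (s := {x : ℂ | x ≠ 0})
  swap
  · exact (Set.finite_singleton (0:ℂ)).infinite_compl
  intro s hs
  simp only [Set.mem_setOf_eq, eval_mul, eval_pow, eval_X]
  rw [evalCharpoly, evalCharpoly]
  have e1 : s • (1 : Matrix m m ℂ) - M * N = s • ((1 : Matrix m m ℂ) - s⁻¹ • (M * N)) := by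
    rw [smul_sub, smul_smul, mul_inv_cancel₀ hs, one_smul]
  have e2 : s • (1 : Matrix k k ℂ) - N * M = s • ((1 : Matrix k k ℂ) - s⁻¹ • (N * M)) := by
    rw [smul_sub, smul_smul, mul_inv_cancel₀ hs, one_smul]
  have e3 : Matrix.det ((1 : Matrix m m ℂ) - s⁻¹ • (M * N))
      = Matrix.det ((1 : Matrix k k ℂ) - s⁻¹ • (N * M)) := by
    rw [show s⁻¹ • (M * N) = (s⁻¹ • M) * N from (Matrix.smul_mul _ _ _).symm,
      Matrix.det_one_sub_mul_comm, Matrix.mul_smul]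
  rw [e1, e2, Matrix.det_smul, Matrix.det_smul, e3]
  ring

open Polynomial Matrix in
private lemma charpolyHermitian {p : Type*} [Fintype p] [DecidableEq p]
    {A : Matrix p p ℂ} (hA : A.IsHermitian) :
    A.charpoly = ∏ i, (X - C ((hA.eigenvalues i : ℝ) : ℂ)) := by
  have hs := hA.spectral_theorem
  set U : Matrix p p ℂ := (hA.eigenvectorUnitary : Matrix p p ℂ) with hU
  have hUU : U * star U = 1 := Matrix.mem_unitaryGroup_iff.mp hA.eigenvectorUnitary.2
  set D : Matrix p p ℂ := Matrix.diagonal (RCLike.ofReal ∘ hA.eigenvalues) with hD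
  have hcomm : ∀ (B : Matrix p p ℂ[X]), Matrix.scalar p (X : ℂ[X]) * B = B * Matrix.scalar p X :=
    fun B => (Matrix.scalar_commute (X : ℂ[X]) (fun r => Commute.all _ r) B)
  have key : A.charpoly = D.charpoly := by
    show (charmatrix A).det = (charmatrix D).det
    have hcm : charmatrix A = (C.mapMatrix U) * charmatrix D * (C.mapMatrix (star U)) := by
      rw [charmatrix, charmatrix]
      conv_lhs => rw [hs, Unitary.conjStarAlgAut_apply, ← hU]
      rw [mul_sub, sub_mul, _root_.map_mul, _root_.map_mul]
      congr 1
      rw [← hcomm (C.mapMatrix U), mul_assoc, ← _root_.map_mul, hUU]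
      simp
    rw [hcm, Matrix.det_mul, Matrix.det_mul]
    have hr : (C.mapMatrix U).det * (charmatrix D).det * (C.mapMatrix (star U)).det
        = ((C.mapMatrix U).det * (C.mapMatrix (star U)).det) * (charmatrix D).det := by ring
    rw [hr, ← Matrix.det_mul]
    have h2 : C.mapMatrix U * C.mapMatrix (star U) = (1 : Matrix p p ℂ[X]) := by
      rw [← _root_.map_mul, hUU]; simp
    rw [h2, Matrix.det_one, one_mul]
  rw [key]
  have hcd : charmatrix D
      = Matrix.diagonal (fun i => (X : ℂ[X]) - C ((hA.eigenvalues i : ℝ) : ℂ)) := by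
    ext i j
    by_cases h : i = j <;> simp [charmatrix, h, hD, Matrix.diagonal, RCLike.ofReal]
  rw [Matrix.charpoly, hcd, Matrix.det_diagonal]

open Polynomial Matrix in
private lemma rootsCharpolyHermitian {p : Type*} [Fintype p] [DecidableEq p]
    {A : Matrix p p ℂ} (hA : A.IsHermitian) :
    A.charpoly.roots = Multiset.map (fun i => ((hA.eigenvalues i : ℝ) : ℂ)) Finset.univ.val := by
  rw [charpolyHermitian hA]
  have : ∏ i, (X - C ((hA.eigenvalues i : ℝ) : ℂ))
      = ((Multiset.map (fun i => ((hA.eigenvalues i : ℝ) : ℂ)) Finset.univ.val).map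
          (fun a => X - C a)).prod := by
    rw [Multiset.map_map]
    rfl
  rw [this, Polynomial.roots_multiset_prod_X_sub_C]

open Polynomial Matrix in
private lemma sumGEigenvalues {m k : Type*} [Fintype m] [DecidableEq m] [Fintype k]
    [DecidableEq k] {A : Matrix m m ℂ} {B : Matrix k k ℂ}
    (hA : A.IsHermitian) (hB : B.IsHermitian)
    (h : A.charpoly * X ^ (Fintype.card k) = B.charpoly * X ^ (Fintype.card m))
    (g : ℝ → ℝ) (hg : g 0 = 0) :
    ∑ i, g (hA.eigenvalues i) = ∑ j, g (hB.eigenvalues j) := by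
  have hroots : A.charpoly.roots + Multiset.replicate (Fintype.card k) (0 : ℂ)
      = B.charpoly.roots + Multiset.replicate (Fintype.card m) (0 : ℂ) := by
    have h1 : (A.charpoly * X ^ (Fintype.card k)).roots
        = A.charpoly.roots + Multiset.replicate (Fintype.card k) (0 : ℂ) := by
      rw [Polynomial.roots_mul (mul_ne_zero (Matrix.charpoly_monic A).ne_zero
        (pow_ne_zero _ Polynomial.X_ne_zero)), Polynomial.roots_pow, Polynomial.roots_X,
        Multiset.nsmul_singleton]
    have h2 : (B.charpoly * X ^ (Fintype.card m)).roots
        = B.charpoly.roots + Multiset.replicate (Fintype.card m) (0 : ℂ) := by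
      rw [Polynomial.roots_mul (mul_ne_zero (Matrix.charpoly_monic B).ne_zero
        (pow_ne_zero _ Polynomial.X_ne_zero)), Polynomial.roots_pow, Polynomial.roots_X,
        Multiset.nsmul_singleton]
    rw [← h1, ← h2, h]
  set G : ℂ → ℝ := fun z => g z.re with hG
  have hsum := congrArg (fun s : Multiset ℂ => ((s.map G).sum)) hroots
  simp only [Multiset.map_add, Multiset.sum_add, Multiset.map_replicate,
    rootsCharpolyHermitian hA, rootsCharpolyHermitian hB, Multiset.map_map] at hsum
  have hG0 : G 0 = 0 := by simp [hG, hg]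
  rw [hG0, Multiset.sum_replicate, Multiset.sum_replicate] at hsum
  simp only [smul_zero, add_zero] at hsum
  calc ∑ i, g (hA.eigenvalues i)
      = (Multiset.map (G ∘ fun i => ((hA.eigenvalues i : ℝ) : ℂ)) Finset.univ.val).sum := by
        rw [Finset.sum]
        congr 1
    _ = (Multiset.map (G ∘ fun j => ((hB.eigenvalues j : ℝ) : ℂ)) Finset.univ.val).sum := hsum
    _ = ∑ j, g (hB.eigenvalues j) := by
        rw [Finset.sum]
        congr 1

private lemma vnEntropy_of {n : Type*} [Fintype n] [DecidableEq n] {ρ : Matrix n n ℂ}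
    (h : ρ.IsHermitian) :
    vnEntropy ρ = -∑ i, h.eigenvalues i * Real.log (h.eigenvalues i) := dif_pos h

open Polynomial Matrix in
private lemma vnEntropyMulConjTranspose {m k : Type*} [Fintype m] [DecidableEq m]
    [Fintype k] [DecidableEq k] (M : Matrix m k ℂ) :
    vnEntropy (M * Mᴴ) = vnEntropy ((Mᴴ * M)ᵀ) := by
  have hA : (M * Mᴴ).IsHermitian := Matrix.isHermitian_mul_conjTranspose_self M
  have hB0 : (Mᴴ * M).IsHermitian := Matrix.isHermitian_conjTranspose_mul_self M
  have hB : ((Mᴴ * M)ᵀ).IsHermitian := hB0.transpose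
  rw [vnEntropy_of hA, vnEntropy_of hB]
  congr 1
  apply sumGEigenvalues hA hB _ (fun x => x * Real.log x) (by simp)
  rw [charpolyTranspose]
  exact charpolyMulXPow M Mᴴ

open Matrix in
private lemma vnEntropyReduceCompl {ι : Type*} [Fintype ι] [DecidableEq ι] {n : ι → Type*}
    [∀ i, Fintype (n i)] [∀ i, DecidableEq (n i)] (ψ : (∀ i, n i) → ℂ) (A : Finset ι) :
    vnEntropy (reduce (Matrix.vecMulVec ψ (star ψ)) A)
      = vnEntropy (reduce (Matrix.vecMulVec ψ (star ψ)) Aᶜ) := by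
  classical
  set M : Matrix (∀ i : A, n i.1) (∀ i : (Aᶜ : Finset ι), n i.1) ℂ :=
    fun x z => ψ (glue A x z) with hM
  have h1 : reduce (Matrix.vecMulVec ψ (star ψ)) A = M * Mᴴ := by
    ext x y
    simp only [Matrix.mul_apply, Matrix.conjTranspose_apply]
    simp [reduce, Matrix.mul_apply, Matrix.vecMulVec_apply, Matrix.conjTranspose_apply, hM]
  let e : (∀ i : A, n i.1) ≃ (∀ i : ((Aᶜ)ᶜ : Finset ι), n i.1) :=
    { toFun := fun x j => x ⟨j.1, by simpa using j.2⟩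
      invFun := fun x' i => x' ⟨i.1, by simpa using i.2⟩
      left_inv := fun x => rfl
      right_inv := fun x' => rfl }
  have hglue : ∀ (x : ∀ i : A, n i.1) (z : ∀ i : (Aᶜ : Finset ι), n i.1),
      glue Aᶜ z (e x) = glue A x z := by
    intro x z
    funext i
    by_cases h : i ∈ A
    · have h' : i ∉ Aᶜ := by simpa using h
      simp only [glue, dif_neg h', dif_pos h]
      rfl
    · have h' : i ∈ Aᶜ := Finset.mem_compl.mpr h
      simp only [glue, dif_pos h', dif_neg h]
  have h2 : reduce (Matrix.vecMulVec ψ (star ψ)) Aᶜ = (Mᴴ * M)ᵀ := by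
    ext z w
    show ∑ x' : ∀ i : ((Aᶜ)ᶜ : Finset ι), n i.1, _ = _
    rw [← Equiv.sum_comp e
      (fun x' => Matrix.vecMulVec ψ (star ψ) (glue Aᶜ z x') (glue Aᶜ w x'))]
    simp only [hglue]
    simp only [Matrix.transpose_apply, Matrix.mul_apply, Matrix.conjTranspose_apply]
    simp [Matrix.mul_apply, Matrix.vecMulVec_apply, Matrix.conjTranspose_apply, hM,
      Matrix.transpose_apply]
    ring_nf
    congr 1
    funext x
    ring
  rw [h1, h2, vnEntropyMulConjTranspose]

/-- Let `τ` be a pure-state extension (on parties `{0,1,…,N'}`, with `none` the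
purifier `0`) of an `N'`-party density matrix, with `N'`-party entropy vector `v`,
and let `f : {0,…,N'} → {0,…,N}` be a surjective coarse graining. Then `Ψ_f v` is
the entropy vector of the same state regarded as an `N`-party state under `f`:
for every nonempty `I ⊆ {1,…,N}`, `(Ψ_f v)_I` equals the entropy of the reduction
of `τ` to the full preimage `f⁻¹(I) ⊆ {0,…,N'}`. -/
theorem Psi_entropyVec_pure_extension (NP N : ℕ) (d : Option (Fin NP) → ℕ)
    (τ : Matrix (∀ i, Fin (d i)) (∀ i, Fin (d i)) ℂ)
    (hτ : IsPureDensity τ)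
    (f : Option (Fin NP) → Option (Fin N)) (hf : Function.Surjective f)
    (v : ES NP)
    (hv : ∀ J : {I : Finset (Fin NP) // I.Nonempty},
      v J = vnEntropy (reduce τ (J.1.map Function.Embedding.some)))
    (I : {I : Finset (Fin N) // I.Nonempty}) :
    Psi f v I =
      vnEntropy (reduce τ
        (Finset.univ.filter (fun i : Option (Fin NP) => f i ∈ I.1.image some))) := by
  obtain ⟨_, ψ, hψ⟩ := hτ
  classical
  set P : Finset (Fin NP) :=
    Finset.univ.filter (fun i => f (some i) ∈ I.1.image some) with hP
  set K : Finset (Option (Fin NP)) :=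
    Finset.univ.filter (fun i : Option (Fin NP) => f i ∈ I.1.image some) with hK
  show (if f none ∈ I.1.image some then comp v Pᶜ else comp v P) = vnEntropy (reduce τ K)
  by_cases h : f none ∈ I.1.image some
  · rw [if_pos h]
    obtain ⟨x, hx⟩ := hf none
    have hxn : x ≠ none := by
      rintro rfl
      rw [hx] at h
      simp [Finset.mem_image] at h
    obtain ⟨i0, rfl⟩ := Option.ne_none_iff_exists'.mp hxn
    have hi0 : i0 ∈ Pᶜ := by simp [hP, hx, Finset.mem_image]
    have hne : Pᶜ.Nonempty := ⟨i0, hi0⟩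
    have hcomp : comp v Pᶜ = v ⟨Pᶜ, hne⟩ := dif_pos hne
    rw [hcomp, hv ⟨Pᶜ, hne⟩]
    have hKc : Pᶜ.map Function.Embedding.some = Kᶜ := by
      ext x
      cases x with
      | none =>
        simp only [Finset.mem_map, Finset.mem_compl, hK, Finset.mem_filter, Finset.mem_univ,
          true_and]
        constructor
        · rintro ⟨a, -, hc⟩; exact absurd hc (by simp)
        · intro hc; exact absurd h hc
      | some a => simp [hK, hP]
    rw [hKc, hψ]
    exact (vnEntropyReduceCompl ψ K).symm
  · rw [if_neg h]
    obtain ⟨j, hj⟩ := I.2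
    obtain ⟨x, hx⟩ := hf (some j)
    have hxn : x ≠ none := by
      rintro rfl
      rw [hx] at h
      exact h (Finset.mem_image_of_mem _ hj)
    obtain ⟨i0, rfl⟩ := Option.ne_none_iff_exists'.mp hxn
    have hi0 : i0 ∈ P := by
      rw [hP, Finset.mem_filter]
      exact ⟨Finset.mem_univ _, by rw [hx]; exact Finset.mem_image_of_mem some hj⟩
    have hne : P.Nonempty := ⟨i0, hi0⟩
    have hcomp : comp v P = v ⟨P, hne⟩ := dif_pos hne
    rw [hcomp, hv ⟨P, hne⟩]
    have hKP : P.map Function.Embedding.some = K := by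
      ext x
      cases x with
      | none =>
        simp only [Finset.mem_map, hK, Finset.mem_filter, Finset.mem_univ, true_and]
        constructor
        · rintro ⟨a, -, hc⟩; exact absurd hc (by simp)
        · intro hc; exact absurd hc h
      | some a => simp [hK, hP]
    rw [hKP]


end QIT
end
end

section
/- For the hypergraph model consisting of vertices {0,1,...,6} as boundary vertices and three internal vertices a, b, c, with a weight-2 hyperedge {a,b,c} and weight-1 edges {a,1},{a,2},{b,3},{b,4},{c,5},{c,6} (party 0 attached directly as an isolated boundary vertex with an edge structure as in Fig. 1 where 0 is connected only through min-cuts), the min-cut entropy function assigns S_I computed as the minimum over subsets V_I of vertices containing exactly the boundary vertices labeled by I of the total weight of hyperedges crossing the cut; the resulting 6-party entropy vector under the coarse graining 0↦0, 1,2↦1, 3,4↦2, 5,6↦3 yields the entropy vector of the 4-party GHZ state, namely S_1 = S_2 = S_3 = S_12 = S_13 = S_23 = S_123 with common value 2 (up to overall scale). -/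
open scoped BigOperators

noncomputable section

namespace QIT

/-- A hypergraph model of entanglement: a finite weighted hypergraph (hyperedges
are subsets of vertices, `w e = 0` meaning `e` is absent), with boundary vertices
labeled by parties in `ι` (`label v = none` for bulk vertices). -/
structure HGModel (ι : Type) where
  V : Type
  [fV : Fintype V]
  [dV : DecidableEq V]
  w : Finset V → ℝ
  label : V → Option ι

attribute [instance] HGModel.fV HGModel.dV

variable {ι : Type} [Fintype ι] [DecidableEq ι]

/-- The cost of a cut `A`: the total weight of hyperedges with at least one vertex
in `A` and at least one vertex outside `A`. -/
def cutCost (H : HGModel ι) (A : Finset H.V) : ℝ :=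
  ∑ e : Finset H.V, if (e ∩ A).Nonempty ∧ (e \ A).Nonempty then H.w e else 0

/-- `A` is an `I`-cut: it contains exactly the boundary vertices labeled by
parties in `I`. -/
def IsCut (H : HGModel ι) (I : Finset ι) (A : Finset H.V) : Prop :=
  ∀ v : H.V, ∀ l : ι, H.label v = some l → (v ∈ A ↔ l ∈ I)

/-- The min-cut entropy `S_I`: the minimal cost over all `I`-cuts. -/
noncomputable def hgEntropy (H : HGModel ι) (I : Finset ι) : ℝ :=
  sInf {c | ∃ A, IsCut H I A ∧ c = cutCost H A}

/-- The hypergraph of Fig. 1: boundary vertices `0,…,6` labeled by the seven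
parties `{0,1,…,6}` (party `0` the purifier), internal vertices `a = 7`, `b = 8`,
`c = 9`, a weight-2 hyperedge `{0,a,b,c}`, and weight-1 edges
`{1,a},{2,a},{3,b},{4,b},{5,c},{6,c}`. -/
def H9 : HGModel (Fin 7) where
  V := Fin 10
  w := fun e =>
    if e = ({0, 7, 8, 9} : Finset (Fin 10)) then 2
    else if e = {1, 7} ∨ e = {2, 7} ∨ e = {3, 8} ∨ e = {4, 8} ∨ e = {5, 9} ∨ e = {6, 9}
      then 1 else 0
  label := fun v => if h : (v : ℕ) < 7 then some ⟨v, h⟩ else none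

/-- The coarse graining `0 ↦ 0`, `1,2 ↦ 1`, `3,4 ↦ 2`, `5,6 ↦ 3`. -/
def cg9 : Fin 7 → Fin 4 := ![0, 1, 1, 2, 2, 3, 3]

/-! ### Auxiliary machinery -/

/-- The edge set of `H9`. -/
def E9 : Finset (Finset (Fin 10)) := {{0,7,8,9},{1,7},{2,7},{3,8},{4,8},{5,9},{6,9}}

/-- A hyperedge `e` crosses the cut `A`. -/
abbrev cr (e A : Finset (Fin 10)) : Prop := (e ∩ A).Nonempty ∧ (e \ A).Nonempty

lemma cutCost_H9 (A : Finset (Fin 10)) :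
    cutCost H9 A =
      (if cr {0,7,8,9} A then 2 else 0) + (if cr {1,7} A then 1 else 0)
      + (if cr {2,7} A then 1 else 0) + (if cr {3,8} A then 1 else 0)
      + (if cr {4,8} A then 1 else 0) + (if cr {5,9} A then 1 else 0)
      + (if cr {6,9} A then 1 else 0) := by
  have h : cutCost H9 A = ∑ e ∈ E9, if cr e A then H9.w e else 0 := by
    refine (Finset.sum_subset (Finset.subset_univ E9) ?_).symm
    intro e _ he
    have hw : H9.w e = 0 := by
      show (if e = ({0, 7, 8, 9} : Finset (Fin 10)) then (2:ℝ)
        else if e = {1, 7} ∨ e = {2, 7} ∨ e = {3, 8} ∨ e = {4, 8} ∨ e = {5, 9} ∨ e = {6, 9}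
          then 1 else 0) = 0
      rw [if_neg, if_neg]
      · rintro (rfl|rfl|rfl|rfl|rfl|rfl) <;> exact he (by decide)
      · rintro rfl; exact he (by decide)
    simp [cr, hw]
  rw [h]
  show ∑ e ∈ E9, _ = _
  rw [show E9 = insert {0,7,8,9} (insert {1,7} (insert {2,7} (insert {3,8}
      (insert {4,8} (insert {5,9} ({{6,9}} : Finset (Finset (Fin 10)))))))) from rfl]
  rw [Finset.sum_insert (by decide), Finset.sum_insert (by decide),
    Finset.sum_insert (by decide), Finset.sum_insert (by decide),
    Finset.sum_insert (by decide), Finset.sum_insert (by decide),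
    Finset.sum_singleton]
  have wv : ∀ x y : Fin 10, ({x,y} : Finset (Fin 10)) ≠ {0,7,8,9} →
      (({x,y} : Finset (Fin 10)) = {1, 7} ∨ ({x,y} : Finset (Fin 10)) = {2, 7} ∨
       ({x,y} : Finset (Fin 10)) = {3, 8} ∨ ({x,y} : Finset (Fin 10)) = {4, 8} ∨
       ({x,y} : Finset (Fin 10)) = {5, 9} ∨ ({x,y} : Finset (Fin 10)) = {6, 9}) →
      H9.w ({x,y} : Finset (Fin 10)) = 1 := by
    intro x y h1 h2
    simp only [H9]
    rw [if_neg h1, if_pos h2]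
  have w0 : H9.w ({0,7,8,9} : Finset (Fin 10)) = 2 := by
    simp [H9]
  rw [w0, wv 1 7 (by decide) (by decide), wv 2 7 (by decide) (by decide),
    wv 3 8 (by decide) (by decide), wv 4 8 (by decide) (by decide),
    wv 5 9 (by decide) (by decide), wv 6 9 (by decide) (by decide)]
  ring

lemma entropy_eq_two (I : Finset (Fin 7)) (A₀ : Finset (Fin 10))
    (hA₀ : IsCut H9 I A₀) (hc : cutCost H9 A₀ = 2)
    (hlb : ∀ A : Finset (Fin 10), IsCut H9 I A → 2 ≤ cutCost H9 A) :
    hgEntropy H9 I = 2 := by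
  apply le_antisymm
  · exact csInf_le ⟨2, by rintro c ⟨A, hA, rfl⟩; exact hlb A hA⟩ ⟨A₀, hA₀, hc.symm⟩
  · exact le_csInf ⟨_, A₀, hA₀, rfl⟩ (by rintro c ⟨A, hA, rfl⟩; exact hlb A hA)

instance (H : HGModel (Fin 7)) (I : Finset (Fin 7)) (A : Finset H.V) :
    Decidable (IsCut H I A) := by
  unfold IsCut; infer_instance

instance (I : Finset (Fin 7)) (A : Finset (Fin 10)) :
    Decidable (IsCut H9 I A) := by
  show Decidable (∀ v : Fin 10, ∀ l : Fin 7, H9.label v = some l → (v ∈ A ↔ l ∈ I))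
  infer_instance

set_option maxHeartbeats 1600000 in
lemma lb_gen (I : Finset (Fin 7)) (h0I : (0:Fin 7) ∉ I)
    (h12 : (1:Fin 7) ∈ I ↔ (2:Fin 7) ∈ I) (h34 : (3:Fin 7) ∈ I ↔ (4:Fin 7) ∈ I)
    (h56 : (5:Fin 7) ∈ I ↔ (6:Fin 7) ∈ I)
    (hne : (1:Fin 7) ∈ I ∨ (3:Fin 7) ∈ I ∨ (5:Fin 7) ∈ I) :
    ∀ A : Finset (Fin 10), IsCut H9 I A → 2 ≤ cutCost H9 A := by
  intro A hA'
  have hA : ∀ v : Fin 10, ∀ l : Fin 7, H9.label v = some l → (v ∈ A ↔ l ∈ I) := hA'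
  have g0 : (0:Fin 10) ∉ A := fun h => h0I ((hA 0 0 rfl).1 h)
  have g1 := hA 1 1 rfl
  have g2 := hA 2 2 rfl
  have g3 := hA 3 3 rfl
  have g4 := hA 4 4 rfl
  have g5 := hA 5 5 rfl
  have g6 := hA 6 6 rfl
  clear hA hA'
  rw [← h12] at g2
  rw [← h34] at g4
  rw [← h56] at g6
  clear h12 h34 h56
  rw [cutCost_H9]
  by_cases i1 : (1:Fin 7) ∈ I <;> by_cases i3 : (3:Fin 7) ∈ I <;>
      by_cases i5 : (5:Fin 7) ∈ I <;>
    simp only [i1, i3, i5, iff_true, iff_false, or_self, false_or, or_false] at g1 g2 g3 g4 g5 g6 hne ⊢ <;>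
    by_cases h7 : (7:Fin 10) ∈ A <;> by_cases h8 : (8:Fin 10) ∈ A <;>
      by_cases h9 : (9:Fin 10) ∈ A <;>
    simp [cr, Finset.Nonempty, Finset.mem_inter, Finset.mem_sdiff,
      g0, g1, g2, g3, g4, g5, g6, h7, h8, h9] <;>
    norm_num

/-- Under the coarse graining `0↦0, 1,2↦1, 3,4↦2, 5,6↦3`, the min-cut entropy
vector of the hypergraph of Fig. 1 is that of the 4-party GHZ state: all seven
components `S_1, S_2, S_3, S_12, S_13, S_23, S_123` equal `2`. -/
theorem H9_coarse_grained_is_GHZ :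
    ∀ J : Finset (Fin 4), J.Nonempty → (0 : Fin 4) ∉ J →
      hgEntropy H9 (Finset.univ.filter (fun l => cg9 l ∈ J)) = 2 := by
  intro J hne h0
  fin_cases J
  all_goals first
    | exact absurd hne (by decide)
    | exact absurd (by decide) h0
    | exact entropy_eq_two _ ({1,2,7} : Finset (Fin 10)) (by decide) (by
        rw [cutCost_H9, if_pos (by decide), if_neg (by decide), if_neg (by decide),
          if_neg (by decide), if_neg (by decide), if_neg (by decide), if_neg (by decide)]
        norm_num) (lb_gen _ (by decide) (by decide) (by decide) (by decide) (by decide))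
    | exact entropy_eq_two _ ({3,4,8} : Finset (Fin 10)) (by decide) (by
        rw [cutCost_H9, if_pos (by decide), if_neg (by decide), if_neg (by decide),
          if_neg (by decide), if_neg (by decide), if_neg (by decide), if_neg (by decide)]
        norm_num) (lb_gen _ (by decide) (by decide) (by decide) (by decide) (by decide))
    | exact entropy_eq_two _ ({5,6,9} : Finset (Fin 10)) (by decide) (by
        rw [cutCost_H9, if_pos (by decide), if_neg (by decide), if_neg (by decide),
          if_neg (by decide), if_neg (by decide), if_neg (by decide), if_neg (by decide)]
        norm_num) (lb_gen _ (by decide) (by decide) (by decide) (by decide) (by decide))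
    | exact entropy_eq_two _ ({1,2,3,4,7,8} : Finset (Fin 10)) (by decide) (by
        rw [cutCost_H9, if_pos (by decide), if_neg (by decide), if_neg (by decide),
          if_neg (by decide), if_neg (by decide), if_neg (by decide), if_neg (by decide)]
        norm_num) (lb_gen _ (by decide) (by decide) (by decide) (by decide) (by decide))
    | exact entropy_eq_two _ ({1,2,5,6,7,9} : Finset (Fin 10)) (by decide) (by
        rw [cutCost_H9, if_pos (by decide), if_neg (by decide), if_neg (by decide),
          if_neg (by decide), if_neg (by decide), if_neg (by decide), if_neg (by decide)]
        norm_num) (lb_gen _ (by decide) (by decide) (by decide) (by decide) (by decide))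
    | exact entropy_eq_two _ ({3,4,5,6,8,9} : Finset (Fin 10)) (by decide) (by
        rw [cutCost_H9, if_pos (by decide), if_neg (by decide), if_neg (by decide),
          if_neg (by decide), if_neg (by decide), if_neg (by decide), if_neg (by decide)]
        norm_num) (lb_gen _ (by decide) (by decide) (by decide) (by decide) (by decide))
    | exact entropy_eq_two _ ({1,2,3,4,5,6,7,8,9} : Finset (Fin 10)) (by decide) (by
        rw [cutCost_H9, if_pos (by decide), if_neg (by decide), if_neg (by decide),
          if_neg (by decide), if_neg (by decide), if_neg (by decide), if_neg (by decide)]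
        norm_num) (lb_gen _ (by decide) (by decide) (by decide) (by decide) (by decide))

end QIT
end
end

section
/- The min-cut function of a hypergraph model is monotone under coarse graining in the following sense: if a hypergraph model on parties {0,...,N'} is relabeled by composing its boundary labeling with a surjection f : {0,...,N'} → {0,...,N}, the resulting N-party hypergraph model's min-cut entropy vector equals Ψ_f applied to the original model's entropy vector (extended by purifier complements), i.e., S^{new}_I = S^{old}_{f^{-1}(I)}. -/
open scoped BigOperators

noncomputable section

namespace QIT

variable {ι : Type} [Fintype ι] [DecidableEq ι]

/-- The hypergraph model obtained by coarse-graining the parties along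
`f : ι' → ι`, i.e. composing the boundary labeling with `f`. -/
def relabel {ι' : Type} (H : HGModel ι') (f : ι' → ι) : HGModel ι where
  V := H.V
  w := H.w
  label := fun v => (H.label v).map f

/-- Coarse-graining a hypergraph model along a surjection `f` transforms its min-cut
entropy vector by `Ψ_f`: the new entropy of `I` equals the old entropy of the full
preimage `f⁻¹(I)` (with the purifier treated as one of the parties, so that subsets
containing it are automatically handled by the equality of complementary cuts). -/
theorem hgEntropy_relabel {ι' : Type} [Fintype ι'] [DecidableEq ι']
    (H : HGModel ι') (f : ι' → ι) (hf : Function.Surjective f) (I : Finset ι) :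
    hgEntropy (relabel H f) I =
      hgEntropy H (Finset.univ.filter (fun l => f l ∈ I)) := by
  unfold hgEntropy
  congr 1
  ext c
  constructor
  · rintro ⟨A, hA, rfl⟩
    refine ⟨A, ?_, rfl⟩
    intro v l' hl
    have := hA v (f l') (by simp [relabel, hl])
    simp only [Finset.mem_filter, Finset.mem_univ, true_and]
    exact this
  · rintro ⟨A, hA, rfl⟩
    refine ⟨A, ?_, rfl⟩
    intro v l hl
    simp only [relabel, Option.map_eq_some_iff] at hl
    obtain ⟨l', hl', rfl⟩ := hl
    have := hA v l' hl'
    simp only [Finset.mem_filter, Finset.mem_univ, true_and] at this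
    exact this

end QIT
end
end

section
/- Conical combinations of hypergraph-realizable entropy vectors are hypergraph-realizable: if v and w are entropy vectors of N-party hypergraph models and λ, μ ≥ 0 are rational, then λv + μw is the entropy vector of an N-party hypergraph model, obtained (after clearing denominators/rescaling weights) as the disjoint union of the two hypergraphs with weights rescaled by λ and μ respectively. Hence the set of N-party hypergraph entropy vectors is closed under addition and nonnegative rational scaling, and its closure is a convex cone. -/
open scoped BigOperators Pointwise

noncomputable section

namespace QIT

variable {ι : Type} [Fintype ι] [DecidableEq ι]

/-- An `N`-party entropy vector (components indexed by nonempty subsets of the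
parties `{1,…,N}`, the party `0 : Fin (N+1)` being the purifier) is
hypergraph-realizable if it is the min-cut entropy vector of some hypergraph model
with nonnegative weights. -/
def HGRealizable (N : ℕ)
    (v : {I : Finset (Fin (N + 1)) // I.Nonempty ∧ 0 ∉ I} → ℝ) : Prop :=
  ∃ H : HGModel (Fin (N + 1)), (∀ e, 0 ≤ H.w e) ∧ ∀ I, v I = hgEntropy H I.1

/-! ### Auxiliary lemmas -/

/-- Every `I` admits a cut. -/
lemma exists_isCut (H : HGModel ι) (I : Finset ι) : ∃ A, IsCut H I A := by
  classical
  refine ⟨Finset.univ.filter (fun v => ∃ l ∈ I, H.label v = some l), ?_⟩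
  intro v l hl
  simp only [Finset.mem_filter, Finset.mem_univ, true_and]
  constructor
  · rintro ⟨l', hl', heq⟩
    rw [hl] at heq
    injection heq with h
    rwa [h]
  · intro h; exact ⟨l, h, hl⟩

lemma cutCost_nonneg (H : HGModel ι) (hw : ∀ e, 0 ≤ H.w e) (A : Finset H.V) :
    0 ≤ cutCost H A := by
  refine Finset.sum_nonneg fun e _ => ?_
  split <;> [exact hw e; exact le_rfl]

/-- The set of cut costs. -/
def cutSet (H : HGModel ι) (I : Finset ι) : Set ℝ :=
  {c | ∃ A, IsCut H I A ∧ c = cutCost H A}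

lemma hgEntropy_eq (H : HGModel ι) (I : Finset ι) : hgEntropy H I = sInf (cutSet H I) := rfl

lemma cutSet_nonempty (H : HGModel ι) (I : Finset ι) : (cutSet H I).Nonempty := by
  obtain ⟨A, hA⟩ := exists_isCut H I
  exact ⟨cutCost H A, A, hA, rfl⟩

lemma cutSet_bddBelow (H : HGModel ι) (hw : ∀ e, 0 ≤ H.w e) (I : Finset ι) :
    BddBelow (cutSet H I) := by
  refine ⟨0, ?_⟩
  rintro c ⟨A, _, rfl⟩
  exact cutCost_nonneg H hw A

/-! ### Scaling -/

/-- Rescaling all weights of a hypergraph model. -/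
def scaleModel (H : HGModel ι) (c : ℝ) : HGModel ι where
  V := H.V
  w := fun e => c * H.w e
  label := H.label

lemma scaleModel_cutCost (H : HGModel ι) (c : ℝ) (A : Finset H.V) :
    cutCost (scaleModel H c) A = c * cutCost H A := by
  unfold cutCost scaleModel
  rw [Finset.mul_sum]
  exact Finset.sum_congr rfl fun e _ => by rw [mul_ite, mul_zero]

lemma scaleModel_isCut (H : HGModel ι) (c : ℝ) (I : Finset ι) (A : Finset H.V) :
    IsCut (scaleModel H c) I A ↔ IsCut H I A := Iff.rfl

lemma scaleModel_entropy (H : HGModel ι) (c : ℝ) (hc : 0 ≤ c) (I : Finset ι) :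
    hgEntropy (scaleModel H c) I = c * hgEntropy H I := by
  have hset : cutSet (scaleModel H c) I = c • cutSet H I := by
    ext x
    constructor
    · rintro ⟨A, hA, rfl⟩
      refine ⟨cutCost H A, ⟨A, hA, rfl⟩, ?_⟩
      show c • cutCost H A = _
      rw [smul_eq_mul]; exact (scaleModel_cutCost H c A).symm
    · rintro ⟨y, ⟨A, hA, rfl⟩, rfl⟩
      refine ⟨A, hA, ?_⟩
      show c • cutCost H A = _
      rw [smul_eq_mul, scaleModel_cutCost]
  rw [hgEntropy_eq, hgEntropy_eq, hset, Real.sInf_smul_of_nonneg hc, smul_eq_mul]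

/-! ### Disjoint union -/

/-- The left embedding. -/
def embL (H K : HGModel ι) : H.V ↪ H.V ⊕ K.V := ⟨Sum.inl, Sum.inl_injective⟩

def embR (H K : HGModel ι) : K.V ↪ H.V ⊕ K.V := ⟨Sum.inr, Sum.inr_injective⟩

open Classical in
/-- The disjoint union of two hypergraph models. -/
def sumModel (H K : HGModel ι) : HGModel ι where
  V := H.V ⊕ K.V
  w := fun e =>
    if e.Nonempty then
      if h : ∃ a : Finset H.V, e = a.map (embL H K) then H.w h.choose
      else if h : ∃ b : Finset K.V, e = b.map (embR H K) then K.w h.choose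
      else 0
    else 0
  label := Sum.elim H.label K.label

lemma sumModel_w_nonneg (H K : HGModel ι) (hw1 : ∀ e, 0 ≤ H.w e) (hw2 : ∀ e, 0 ≤ K.w e) :
    ∀ e, 0 ≤ (sumModel H K).w e := by
  intro e
  unfold sumModel
  dsimp only
  split
  · split
    · exact hw1 _
    · split
      · exact hw2 _
      · exact le_rfl
  · exact le_rfl

lemma sumModel_w_mapL (H K : HGModel ι) (a : Finset H.V) (ha : a.Nonempty) :
    (sumModel H K).w (a.map (embL H K)) = H.w a := by
  classical
  unfold sumModel
  dsimp only
  rw [if_pos ha.map]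
  have h : ∃ a' : Finset H.V, a.map (embL H K) = a'.map (embL H K) := ⟨a, rfl⟩
  rw [dif_pos h]
  congr 1
  exact (Finset.map_injective (embL H K) h.choose_spec).symm

lemma sumModel_w_mapR (H K : HGModel ι) (b : Finset K.V) (hb : b.Nonempty) :
    (sumModel H K).w (b.map (embR H K)) = K.w b := by
  classical
  unfold sumModel
  dsimp only
  rw [if_pos hb.map]
  have hnot : ¬∃ a' : Finset H.V, b.map (embR H K) = a'.map (embL H K) := by
    rintro ⟨a', ha'⟩
    obtain ⟨x, hx⟩ := hb
    have : Sum.inr x ∈ a'.map (embL H K) := by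
      rw [← ha']; exact Finset.mem_map_of_mem _ hx
    obtain ⟨y, -, hy⟩ := Finset.mem_map.mp this
    exact Sum.inl_ne_inr hy
  rw [dif_neg hnot]
  have h : ∃ b' : Finset K.V, b.map (embR H K) = b'.map (embR H K) := ⟨b, rfl⟩
  rw [dif_pos h]
  congr 1
  exact (Finset.map_injective (embR H K) h.choose_spec).symm

lemma sumModel_w_mixed (H K : HGModel ι) (e : Finset (H.V ⊕ K.V))
    (h1 : ¬∃ a : Finset H.V, e = a.map (embL H K))
    (h2 : ¬∃ b : Finset K.V, e = b.map (embR H K)) :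
    (sumModel H K).w e = 0 := by
  classical
  unfold sumModel
  simp only [dif_neg h1, dif_neg h2, ite_self]

lemma preimage_inl_map_union (H K : HGModel ι) (A1 : Finset H.V) (A2 : Finset K.V) :
    (A1.map (embL H K) ∪ A2.map (embR H K)).preimage Sum.inl
      (Set.injOn_of_injective Sum.inl_injective) = A1 := by
  ext x
  simp [Finset.mem_preimage, embL, embR]

lemma preimage_inr_map_union (H K : HGModel ι) (A1 : Finset H.V) (A2 : Finset K.V) :
    (A1.map (embL H K) ∪ A2.map (embR H K)).preimage Sum.inr
      (Set.injOn_of_injective Sum.inr_injective) = A2 := by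
  ext x
  simp [Finset.mem_preimage, embL, embR]

/-- Cut cost of the union decomposes. -/
lemma sumModel_cutCost (H K : HGModel ι) (A : Finset (H.V ⊕ K.V)) :
    cutCost (sumModel H K) A =
      cutCost H (A.preimage Sum.inl (Set.injOn_of_injective Sum.inl_injective)) +
      cutCost K (A.preimage Sum.inr (Set.injOn_of_injective Sum.inr_injective)) := by
  classical
  set AL := A.preimage Sum.inl (Set.injOn_of_injective Sum.inl_injective) with hAL
  set AR := A.preimage Sum.inr (Set.injOn_of_injective Sum.inr_injective) with hAR
  set g : Finset (H.V ⊕ K.V) → ℝ :=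
    fun e => if (e ∩ A).Nonempty ∧ (e \ A).Nonempty then (sumModel H K).w e else 0 with hg
  set SL : Finset (Finset (H.V ⊕ K.V)) :=
    Finset.univ.image (fun a : Finset H.V => a.map (embL H K)) with hSL
  set SR : Finset (Finset (H.V ⊕ K.V)) :=
    Finset.univ.image (fun b : Finset K.V => b.map (embR H K)) with hSR
  have hgL : ∀ a : Finset H.V, g (a.map (embL H K)) =
      if (a ∩ AL).Nonempty ∧ (a \ AL).Nonempty then H.w a else 0 := by
    intro a
    have hcap : (a.map (embL H K) ∩ A).Nonempty ↔ (a ∩ AL).Nonempty := by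
      constructor
      · rintro ⟨x, hx⟩
        rw [Finset.mem_inter, Finset.mem_map] at hx
        obtain ⟨⟨y, hy, rfl⟩, hxA⟩ := hx
        exact ⟨y, Finset.mem_inter.mpr ⟨hy, Finset.mem_preimage.mpr hxA⟩⟩
      · rintro ⟨y, hy⟩
        rw [Finset.mem_inter, Finset.mem_preimage] at hy
        exact ⟨Sum.inl y, Finset.mem_inter.mpr ⟨Finset.mem_map_of_mem _ hy.1, hy.2⟩⟩
    have hdiff : (a.map (embL H K) \ A).Nonempty ↔ (a \ AL).Nonempty := by
      constructor
      · rintro ⟨x, hx⟩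
        rw [Finset.mem_sdiff, Finset.mem_map] at hx
        obtain ⟨⟨y, hy, rfl⟩, hxA⟩ := hx
        exact ⟨y, Finset.mem_sdiff.mpr ⟨hy, fun h => hxA (Finset.mem_preimage.mp h)⟩⟩
      · rintro ⟨y, hy⟩
        rw [Finset.mem_sdiff] at hy
        exact ⟨Sum.inl y, Finset.mem_sdiff.mpr
          ⟨Finset.mem_map_of_mem _ hy.1, fun h => hy.2 (Finset.mem_preimage.mpr h)⟩⟩
    rw [hg]
    dsimp only
    by_cases hc : (a ∩ AL).Nonempty ∧ (a \ AL).Nonempty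
    · rw [if_pos (by rw [hcap, hdiff]; exact hc), if_pos hc]
      obtain ⟨x, hx⟩ := hc.1
      exact sumModel_w_mapL H K a ⟨x, (Finset.mem_inter.mp hx).1⟩
    · rw [if_neg (by rw [hcap, hdiff]; exact hc), if_neg hc]
  have hgR : ∀ b : Finset K.V, g (b.map (embR H K)) =
      if (b ∩ AR).Nonempty ∧ (b \ AR).Nonempty then K.w b else 0 := by
    intro b
    have hcap : (b.map (embR H K) ∩ A).Nonempty ↔ (b ∩ AR).Nonempty := by
      constructor
      · rintro ⟨x, hx⟩
        rw [Finset.mem_inter, Finset.mem_map] at hx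
        obtain ⟨⟨y, hy, rfl⟩, hxA⟩ := hx
        exact ⟨y, Finset.mem_inter.mpr ⟨hy, Finset.mem_preimage.mpr hxA⟩⟩
      · rintro ⟨y, hy⟩
        rw [Finset.mem_inter, Finset.mem_preimage] at hy
        exact ⟨Sum.inr y, Finset.mem_inter.mpr ⟨Finset.mem_map_of_mem _ hy.1, hy.2⟩⟩
    have hdiff : (b.map (embR H K) \ A).Nonempty ↔ (b \ AR).Nonempty := by
      constructor
      · rintro ⟨x, hx⟩
        rw [Finset.mem_sdiff, Finset.mem_map] at hx
        obtain ⟨⟨y, hy, rfl⟩, hxA⟩ := hx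
        exact ⟨y, Finset.mem_sdiff.mpr ⟨hy, fun h => hxA (Finset.mem_preimage.mp h)⟩⟩
      · rintro ⟨y, hy⟩
        rw [Finset.mem_sdiff] at hy
        exact ⟨Sum.inr y, Finset.mem_sdiff.mpr
          ⟨Finset.mem_map_of_mem _ hy.1, fun h => hy.2 (Finset.mem_preimage.mpr h)⟩⟩
    rw [hg]
    dsimp only
    by_cases hc : (b ∩ AR).Nonempty ∧ (b \ AR).Nonempty
    · rw [if_pos (by rw [hcap, hdiff]; exact hc), if_pos hc]
      obtain ⟨x, hx⟩ := hc.1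
      exact sumModel_w_mapR H K b ⟨x, (Finset.mem_inter.mp hx).1⟩
    · rw [if_neg (by rw [hcap, hdiff]; exact hc), if_neg hc]
  have hzero : ∀ e ∈ Finset.univ \ (SL ∪ SR), g e = 0 := by
    intro e he
    rw [Finset.mem_sdiff, Finset.mem_union, hSL, hSR] at he
    simp only [Finset.mem_image, Finset.mem_univ, true_and] at he
    push_neg at he
    obtain ⟨h1, h2⟩ := he
    rw [hg]
    dsimp only
    rw [sumModel_w_mixed H K e (fun ⟨a, ha⟩ => (h1 a ha.symm))
      (fun ⟨b, hb⟩ => (h2 b hb.symm)), ite_self]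
  have hsum : cutCost (sumModel H K) A = ∑ e ∈ SL ∪ SR, g e := by
    exact (Finset.sum_subset (Finset.subset_univ (SL ∪ SR))
      (fun e _ he => hzero e (Finset.mem_sdiff.mpr ⟨Finset.mem_univ e, he⟩))).symm
  have hinter : SL ∩ SR = {(∅ : Finset (H.V ⊕ K.V))} := by
    ext e
    rw [Finset.mem_inter, Finset.mem_singleton, hSL, hSR]
    constructor
    · rintro ⟨hl, hr⟩
      obtain ⟨a, -, rfl⟩ := Finset.mem_image.mp hl
      obtain ⟨b, -, hb⟩ := Finset.mem_image.mp hr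
      rcases a.eq_empty_or_nonempty with rfl | ⟨x, hx⟩
      · simp
      · exfalso
        have hmem : Sum.inl x ∈ b.map (embR H K) := by
          rw [hb]; exact Finset.mem_map_of_mem _ hx
        obtain ⟨y, -, hy⟩ := Finset.mem_map.mp hmem
        exact Sum.inr_ne_inl hy
    · rintro rfl
      exact ⟨Finset.mem_image.mpr ⟨∅, Finset.mem_univ _, Finset.map_empty _⟩,
        Finset.mem_image.mpr ⟨∅, Finset.mem_univ _, Finset.map_empty _⟩⟩
  have hunion : ∑ e ∈ SL ∪ SR, g e = ∑ e ∈ SL, g e + ∑ e ∈ SR, g e := by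
    have := Finset.sum_union_inter (s₁ := SL) (s₂ := SR) (f := g)
    rw [hinter] at this
    have hge : g ∅ = 0 := by
      rw [hg]; dsimp only; rw [if_neg]
      rintro ⟨⟨x, hx⟩, -⟩
      simp at hx
    rw [Finset.sum_singleton, hge, add_zero] at this
    exact this
  have hSLsum : ∑ e ∈ SL, g e = cutCost H AL := by
    rw [hSL, Finset.sum_image (fun a _ b _ h => Finset.map_injective (embL H K) h)]
    rw [cutCost]
    exact Finset.sum_congr rfl fun a _ => hgL a
  have hSRsum : ∑ e ∈ SR, g e = cutCost K AR := by
    rw [hSR, Finset.sum_image (fun a _ b _ h => Finset.map_injective (embR H K) h)]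
    rw [cutCost]
    exact Finset.sum_congr rfl fun b _ => hgR b
  rw [hsum, hunion, hSLsum, hSRsum]

lemma sumModel_isCut_preL (H K : HGModel ι) (I : Finset ι) (A : Finset (H.V ⊕ K.V))
    (h : IsCut (sumModel H K) I A) :
    IsCut H I (A.preimage Sum.inl (Set.injOn_of_injective Sum.inl_injective)) := by
  intro v l hl
  rw [Finset.mem_preimage]
  exact h (Sum.inl v) l hl

lemma sumModel_isCut_preR (H K : HGModel ι) (I : Finset ι) (A : Finset (H.V ⊕ K.V))
    (h : IsCut (sumModel H K) I A) :
    IsCut K I (A.preimage Sum.inr (Set.injOn_of_injective Sum.inr_injective)) := by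
  intro v l hl
  rw [Finset.mem_preimage]
  exact h (Sum.inr v) l hl

lemma sumModel_isCut_union (H K : HGModel ι) (I : Finset ι)
    (A1 : Finset H.V) (A2 : Finset K.V)
    (h1 : IsCut H I A1) (h2 : IsCut K I A2) :
    IsCut (sumModel H K) I (A1.map (embL H K) ∪ A2.map (embR H K)) := by
  rintro (v | v) l hl
  · have hlv : H.label v = some l := hl
    rw [← h1 v l hlv]; refine Finset.mem_union.trans ?_
    constructor
    · rintro (h | h)
      · obtain ⟨a, ha, hEq⟩ := Finset.mem_map.mp h
        obtain rfl : a = v := Sum.inl_injective hEq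
        exact ha
      · obtain ⟨b, -, hEq⟩ := Finset.mem_map.mp h
        exact (Sum.inr_ne_inl hEq).elim
    · intro hv
      exact Or.inl (Finset.mem_map_of_mem _ hv)
  · have hlv : K.label v = some l := hl
    rw [← h2 v l hlv]; refine Finset.mem_union.trans ?_
    constructor
    · rintro (h | h)
      · obtain ⟨a, -, hEq⟩ := Finset.mem_map.mp h
        exact (Sum.inl_ne_inr hEq).elim
      · obtain ⟨b, hb, hEq⟩ := Finset.mem_map.mp h
        obtain rfl : b = v := Sum.inr_injective hEq
        exact hb
    · intro hv
      exact Or.inr (Finset.mem_map_of_mem _ hv)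

lemma sumModel_entropy (H K : HGModel ι) (hw1 : ∀ e, 0 ≤ H.w e) (hw2 : ∀ e, 0 ≤ K.w e)
    (I : Finset ι) :
    hgEntropy (sumModel H K) I = hgEntropy H I + hgEntropy K I := by
  rw [hgEntropy_eq, hgEntropy_eq, hgEntropy_eq]
  have hne1 := cutSet_nonempty H I
  have hne2 := cutSet_nonempty K I
  have hbdd1 := cutSet_bddBelow H hw1 I
  have hbdd2 := cutSet_bddBelow K hw2 I
  have hnesum := cutSet_nonempty (sumModel H K) I
  apply le_antisymm
  · -- sInf sum ≤ sInf1 + sInf2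
    have key : ∀ c1 ∈ cutSet H I, ∀ c2 ∈ cutSet K I,
        sInf (cutSet (sumModel H K) I) ≤ c1 + c2 := by
      rintro c1 ⟨A1, hA1, rfl⟩ c2 ⟨A2, hA2, rfl⟩
      have hmem : cutCost H A1 + cutCost K A2 ∈ cutSet (sumModel H K) I := by
        refine ⟨A1.map (embL H K) ∪ A2.map (embR H K),
          sumModel_isCut_union H K I A1 A2 hA1 hA2, ?_⟩
        have := sumModel_cutCost H K (A1.map (embL H K) ∪ A2.map (embR H K))
        rw [preimage_inl_map_union, preimage_inr_map_union] at this
        exact this.symm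
      exact csInf_le (cutSet_bddBelow _ (sumModel_w_nonneg H K hw1 hw2) I) hmem
    have h1 : ∀ c2 ∈ cutSet K I, sInf (cutSet (sumModel H K) I) - c2 ≤ sInf (cutSet H I) := by
      intro c2 hc2
      apply le_csInf hne1
      intro c1 hc1
      linarith [key c1 hc1 c2 hc2]
    have h2 : sInf (cutSet (sumModel H K) I) - sInf (cutSet H I) ≤ sInf (cutSet K I) := by
      apply le_csInf hne2
      intro c2 hc2
      linarith [h1 c2 hc2]
    linarith
  · apply le_csInf hnesum
    rintro c ⟨A, hA, rfl⟩
    rw [show cutCost (sumModel H K) A = _ from sumModel_cutCost H K A]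
    have m1 : cutCost H (A.preimage Sum.inl (Set.injOn_of_injective Sum.inl_injective))
        ∈ cutSet H I := ⟨_, sumModel_isCut_preL H K I A hA, rfl⟩
    have m2 : cutCost K (A.preimage Sum.inr (Set.injOn_of_injective Sum.inr_injective))
        ∈ cutSet K I := ⟨_, sumModel_isCut_preR H K I A hA, rfl⟩
    exact add_le_add (csInf_le hbdd1 m1) (csInf_le hbdd2 m2)

/-! ### Conical combinations -/

lemma hgRealizable_smul_add (N : ℕ)
    (v w : {I : Finset (Fin (N + 1)) // I.Nonempty ∧ 0 ∉ I} → ℝ)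
    (a b : ℝ) (ha : 0 ≤ a) (hb : 0 ≤ b)
    (hv : HGRealizable N v) (hw : HGRealizable N w) :
    HGRealizable N (a • v + b • w) := by
  obtain ⟨H, hwH, hH⟩ := hv
  obtain ⟨K, hwK, hK⟩ := hw
  have hwHa : ∀ e, 0 ≤ (scaleModel H a).w e := fun e => mul_nonneg ha (hwH e)
  have hwKb : ∀ e, 0 ≤ (scaleModel K b).w e := fun e => mul_nonneg hb (hwK e)
  refine ⟨sumModel (scaleModel H a) (scaleModel K b),
    sumModel_w_nonneg _ _ hwHa hwKb, fun I => ?_⟩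
  rw [sumModel_entropy _ _ hwHa hwKb, scaleModel_entropy H a ha, scaleModel_entropy K b hb]
  simp only [Pi.add_apply, Pi.smul_apply, smul_eq_mul, hH I, hK I]

/-- Conical combinations of hypergraph-realizable entropy vectors are
hypergraph-realizable: if `v, w` are realized by hypergraph models and
`λ, μ ≥ 0` are rational then `λ•v + μ•w` is realized by a hypergraph model
(the disjoint union with rescaled weights); hence the set of hypergraph entropy
vectors is closed under addition and nonnegative rational scaling, and its closure
is a convex cone. -/
theorem hgRealizable_conical (N : ℕ) :
    (∀ (v w : {I : Finset (Fin (N + 1)) // I.Nonempty ∧ 0 ∉ I} → ℝ)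
      (lam mu : ℚ), HGRealizable N v → HGRealizable N w → 0 ≤ lam → 0 ≤ mu →
        HGRealizable N ((lam : ℝ) • v + (mu : ℝ) • w)) ∧
    Convex ℝ (closure {v | HGRealizable N v}) ∧
    (∀ c : ℝ, 0 ≤ c → ∀ v ∈ closure {v | HGRealizable N v},
      c • v ∈ closure {v | HGRealizable N v}) := by
  refine ⟨fun v w lam mu hv hw hl hm =>
    hgRealizable_smul_add N v w _ _ (by exact_mod_cast hl) (by exact_mod_cast hm) hv hw,
    ?_, ?_⟩
  · have hconv : Convex ℝ {v | HGRealizable N v} := by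
      intro x hx y hy a b ha hb _
      exact hgRealizable_smul_add N x y a b ha hb hx hy
    exact hconv.closure
  · intro c hc v hv
    have hmaps : Set.MapsTo (fun x => c • x) {v | HGRealizable N v} {v | HGRealizable N v} := by
      intro x hx
      have := hgRealizable_smul_add N x x c 0 hc le_rfl hx hx
      simpa using this
    have hcont : Continuous (fun x : {I : Finset (Fin (N + 1)) // I.Nonempty ∧ 0 ∉ I} → ℝ =>
        c • x) := continuous_const_smul c
    have := (hmaps.closure hcont) hv
    exact this

end QIT
end
end
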